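/- arXiv:1004.5231 — 5 statements merged into one kernel-verified Lean document; each statement's English description precedes it below -/
import Mathlib

section
/- Let ω ∈ D(ν,τ) and let η: ℝ^ℓ → ℂ be given by an absolutely convergent Fourier series η(θ) = Σ_{k∈ℤ^ℓ} η̂_k e^{2πi k·θ} whose coefficients satisfy η̂_0 = 0 and |η̂_k| ≤ M e^{−δ|k|} for some constants M > 0, δ > 0. Then the series φ(θ) = Σ_{k∈ℤ^ℓ\{0}} η̂_k (1 − e^{2πi k·ω})^{−1} e^{2πi k·θ} converges absolutely and uniformly on ℝ^ℓ, defines a continuous ℤ^ℓ-periodic function φ, and φ(θ) − φ(θ + ω) = η(θ) for every θ ∈ ℝ^ℓ. -/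
/-- The `k`-th term of the formal solution of the cohomology equation
`φ − φ∘T_ω = η`, namely `η̂_k (1 − e^{2πi k·ω})⁻¹ e^{2πi k·θ}`. -/
noncomputable def phiTerm (ℓ : ℕ) (ηhat : (Fin ℓ → ℤ) → ℂ) (ω : Fin ℓ → ℝ)
    (k : Fin ℓ → ℤ) (θ : Fin ℓ → ℝ) : ℂ :=
  ηhat k *
    (1 - Complex.exp (((2 * Real.pi : ℝ) : ℂ) * Complex.I *
      ((∑ i, (k i : ℝ) * ω i : ℝ) : ℂ)))⁻¹ *
    Complex.exp (((2 * Real.pi : ℝ) : ℂ) * Complex.I *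
      ((∑ i, (k i : ℝ) * θ i : ℝ) : ℂ))
/-!
Write `𝐞 x = e^{2πi x}`. The `k`-th term of `φ` has modulus `|η̂_k| / |1 - 𝐞 (k·ω)|`, and
`|1 - 𝐞 x| = 2|sin πx| ≥ 4 dist(x, ℤ)`, so the Diophantine condition bounds the small divisor by
`ν|k|^τ / 4`. The polynomial loss `|k|^τ` is absorbed by half of the exponential decay, leaving
the summable majorant `C e^{-δ|k|/2}` over `ℤ^ℓ`; the Weierstrass M-test then gives uniform
convergence and continuity. Periodicity and the cohomological equation hold term by term,
since `𝐞 (k·(θ+ω)) = 𝐞 (k·θ) 𝐞 (k·ω)` and `η̂_0 = 0`.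
-/

open Real Filter FourierTransform

lemma cexp_two_pi_mul_I_mul (x : ℝ) :
    Complex.exp (((2 * π : ℝ) : ℂ) * Complex.I * (x : ℂ)) = 𝐞 x := by
  rw [fourierChar_apply]; push_cast; ring_nf

lemma fourierChar_intCast (n : ℤ) : (𝐞 (n : ℝ) : ℂ) = 1 := by
  rw [fourierChar_apply', Circle.exp_two_pi_mul_int, Circle.coe_one]

lemma norm_one_sub_fourierChar (x : ℝ) : ‖1 - (𝐞 x : ℂ)‖ = 2 * |sin (π * x)| := by
  rw [norm_sub_rev, fourierChar_apply, mul_comm, Complex.norm_exp_I_mul_ofReal_sub_one, norm_mul,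
    Real.norm_two, Real.norm_eq_abs]
  ring_nf

/-- Jordan's inequality `|sin t| ≥ 2|t|/π` on `[-π/2, π/2]`, applied at the nearest integer. -/
lemma four_mul_abs_sub_round_le_norm_one_sub_fourierChar (x : ℝ) :
    4 * |x - round x| ≤ ‖1 - (𝐞 x : ℂ)‖ := by
  have hshift : (𝐞 x : ℂ) = 𝐞 (x - round x) := by
    rw [← mul_one (𝐞 (x - round x) : ℂ), ← fourierChar_intCast (round x), ← Circle.coe_mul,
      ← AddChar.map_add_eq_mul, sub_add_cancel]
  have hhalf : |π * (x - round x)| ≤ π / 2 := by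
    rw [abs_mul, abs_of_pos pi_pos]
    nlinarith [abs_sub_round x, pi_pos]
  have hjordan := mul_abs_le_abs_sin hhalf
  rw [abs_mul, abs_of_pos pi_pos, ← mul_assoc, div_mul_cancel₀ _ pi_ne_zero] at hjordan
  rw [hshift, norm_one_sub_fourierChar]
  linarith

lemma four_mul_le_norm_one_sub_fourierChar {x c : ℝ} (h : ∀ n : ℤ, c ≤ |x - n|) :
    4 * c ≤ ‖1 - (𝐞 x : ℂ)‖ :=
  (mul_le_mul_of_nonneg_left (h (round x)) (by norm_num)).trans
    (four_mul_abs_sub_round_le_norm_one_sub_fourierChar x)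

/-- The constant comes from `s ^ τ ≤ s ^ m` with `m = ⌈τ⌉₊` and the single term
`(δ s / 2) ^ m / m! ≤ e^{δ s / 2}` of the exponential series. -/
lemma rpow_mul_exp_neg_le {τ δ s : ℝ} (hδ : 0 < δ) (hs : 1 ≤ s) :
    s ^ τ * exp (-δ * s) ≤
      ⌈τ⌉₊.factorial * (2 / δ) ^ ⌈τ⌉₊ * exp (-(δ / 2) * s) := by
  set m := ⌈τ⌉₊
  have hpow : s ^ τ ≤ s ^ m := by
    rw [← rpow_natCast]; exact rpow_le_rpow_of_exponent_le hs (Nat.le_ceil τ)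
  have hterm : (δ / 2 * s) ^ m / m.factorial ≤ exp (δ / 2 * s) :=
    pow_div_factorial_le_exp _ (by positivity) m
  rw [div_le_iff₀ (by positivity)] at hterm
  have hsm : s ^ m = (2 / δ) ^ m * (δ / 2 * s) ^ m := by
    rw [← mul_pow, ← mul_assoc, div_mul_div_cancel₀ (by positivity), div_self two_ne_zero, one_mul]
  calc s ^ τ * exp (-δ * s) ≤ (2 / δ) ^ m * (δ / 2 * s) ^ m * exp (-δ * s) := by
        rw [← hsm]; gcongr
    _ ≤ (2 / δ) ^ m * (exp (δ / 2 * s) * m.factorial) * exp (-δ * s) := by gcongr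
    _ = m.factorial * (2 / δ) ^ m * exp (-(δ / 2) * s) := by
        rw [show -(δ / 2) * s = δ / 2 * s + -δ * s by ring, exp_add]; ring

lemma summable_exp_neg_mul_abs_int {c : ℝ} (hc : 0 < c) :
    Summable fun n : ℤ => exp (-c * |(n : ℝ)|) := by
  have hgeom : Summable fun n : ℕ => exp (-c) ^ n :=
    summable_geometric_of_lt_one (exp_nonneg _) (exp_lt_one_iff.mpr (by linarith))
  apply Summable.of_nat_of_neg <;>
  · refine hgeom.congr fun n => ?_
    rw [← exp_nat_mul]
    simp only [Int.cast_natCast, Int.cast_neg, abs_neg, Nat.abs_cast]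
    ring_nf

lemma summable_exp_neg_mul_sum_abs (ℓ : ℕ) {c : ℝ} (hc : 0 < c) :
    Summable fun k : Fin ℓ → ℤ => exp (-c * ∑ i, |(k i : ℝ)|) := by
  induction ℓ with
  | zero => exact .of_finite
  | succ n ih =>
    have hprod := (summable_exp_neg_mul_abs_int hc).mul_of_nonneg ih
      (fun _ => (exp_pos _).le) (fun _ => (exp_pos _).le)
    refine (Fin.consEquiv (fun _ : Fin (n + 1) => ℤ)).summable_iff.mp (hprod.congr ?_)
    rintro ⟨a, g⟩
    simp [Fin.consEquiv, Fin.sum_univ_succ, ← exp_add, mul_add]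

lemma one_le_sum_abs_of_ne_zero {ℓ : ℕ} {k : Fin ℓ → ℤ} (hk : k ≠ 0) :
    1 ≤ ∑ i, |(k i : ℝ)| := by
  obtain ⟨j, hj⟩ := Function.ne_iff.mp hk
  calc (1 : ℝ) ≤ |(k j : ℝ)| := by
        rw [← Int.cast_abs]; exact_mod_cast Int.one_le_abs hj
    _ ≤ ∑ i, |(k i : ℝ)| :=
        Finset.single_le_sum (f := fun i => |(k i : ℝ)|) (fun _ _ => abs_nonneg _)
          (Finset.mem_univ j)

lemma sum_int_mul_add {ℓ : ℕ} (k : Fin ℓ → ℤ) (θ v : Fin ℓ → ℝ) :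
    ∑ i, (k i : ℝ) * (θ + v) i = ∑ i, (k i : ℝ) * θ i + ∑ i, (k i : ℝ) * v i := by
  simp only [Pi.add_apply, mul_add, Finset.sum_add_distrib]

section phiTerm

variable {ℓ : ℕ} {ηhat : (Fin ℓ → ℤ) → ℂ} {ω : Fin ℓ → ℝ}

lemma phiTerm_eq_fourierChar (k : Fin ℓ → ℤ) (θ : Fin ℓ → ℝ) :
    phiTerm ℓ ηhat ω k θ =
      ηhat k * (1 - (𝐞 (∑ i, (k i : ℝ) * ω i) : ℂ))⁻¹ * 𝐞 (∑ i, (k i : ℝ) * θ i) := by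
  simp only [phiTerm, cexp_two_pi_mul_I_mul]

lemma continuous_phiTerm (k : Fin ℓ → ℤ) : Continuous (phiTerm ℓ ηhat ω k) := by
  unfold phiTerm; fun_prop

lemma phiTerm_add_intCast (k e : Fin ℓ → ℤ) (θ : Fin ℓ → ℝ) :
    phiTerm ℓ ηhat ω k (θ + fun i => (e i : ℝ)) = phiTerm ℓ ηhat ω k θ := by
  have hint : ∑ i, (k i : ℝ) * (e i : ℝ) = ((∑ i, k i * e i : ℤ) : ℝ) := by push_cast; rfl
  rw [phiTerm_eq_fourierChar, phiTerm_eq_fourierChar, sum_int_mul_add, hint, AddChar.map_add_eq_mul,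
    Circle.coe_mul, fourierChar_intCast, mul_one]

variable {ν τ M δ : ℝ} (hν : 0 < ν)
  (hdio : ∀ k : Fin ℓ → ℤ, k ≠ 0 → ∀ n : ℤ,
    (ν * (∑ i, |(k i : ℝ)|) ^ τ)⁻¹ ≤ |(∑ i, (k i : ℝ) * ω i) - (n : ℝ)|)
include hν hdio

lemma norm_phiTerm_le (hM : 0 ≤ M) (hδ : 0 < δ)
    (hdecay : ∀ k : Fin ℓ → ℤ, ‖ηhat k‖ ≤ M * exp (-δ * (∑ i, |(k i : ℝ)|)))
    (k : Fin ℓ → ℤ) (θ : Fin ℓ → ℝ) :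
    ‖phiTerm ℓ ηhat ω k θ‖ ≤
      M * ν / 4 * (⌈τ⌉₊.factorial * (2 / δ) ^ ⌈τ⌉₊) * exp (-(δ / 2) * ∑ i, |(k i : ℝ)|) := by
  set S := ∑ i, |(k i : ℝ)|
  rcases eq_or_ne k 0 with rfl | hk
  · rw [show phiTerm ℓ ηhat ω 0 θ = 0 by simp [phiTerm_eq_fourierChar], norm_zero]
    positivity
  have hS : 1 ≤ S := one_le_sum_abs_of_ne_zero hk
  have hden : 4 * (ν * S ^ τ)⁻¹ ≤ ‖1 - (𝐞 (∑ i, (k i : ℝ) * ω i) : ℂ)‖ :=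
    four_mul_le_norm_one_sub_fourierChar (hdio k hk)
  have hinv : ‖(1 - (𝐞 (∑ i, (k i : ℝ) * ω i) : ℂ))⁻¹‖ ≤ ν * S ^ τ / 4 := by
    rw [norm_inv]
    refine (inv_anti₀ (by positivity) hden).trans_eq ?_
    field_simp
  calc ‖phiTerm ℓ ηhat ω k θ‖ ≤ M * exp (-δ * S) * (ν * S ^ τ / 4) := by
        rw [phiTerm_eq_fourierChar, norm_mul, norm_mul, Circle.norm_coe, mul_one]
        exact mul_le_mul (hdecay k) hinv (norm_nonneg _) (by positivity)
    _ = M * ν / 4 * (S ^ τ * exp (-δ * S)) := by ring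
    _ ≤ M * ν / 4 * (⌈τ⌉₊.factorial * (2 / δ) ^ ⌈τ⌉₊ * exp (-(δ / 2) * S)) :=
        mul_le_mul_of_nonneg_left (rpow_mul_exp_neg_le hδ hS) (by positivity)
    _ = _ := by ring

lemma phiTerm_sub_phiTerm_add (hη0 : ηhat 0 = 0) (k : Fin ℓ → ℤ) (θ : Fin ℓ → ℝ) :
    phiTerm ℓ ηhat ω k θ - phiTerm ℓ ηhat ω k (θ + ω) =
      ηhat k * Complex.exp (((2 * π : ℝ) : ℂ) * Complex.I * ((∑ i, (k i : ℝ) * θ i : ℝ) : ℂ)) := by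
  rw [cexp_two_pi_mul_I_mul, phiTerm_eq_fourierChar, phiTerm_eq_fourierChar, sum_int_mul_add,
    AddChar.map_add_eq_mul, Circle.coe_mul]
  rcases eq_or_ne k 0 with rfl | hk
  · simp [hη0]
  have hS : 1 ≤ ∑ i, |(k i : ℝ)| := one_le_sum_abs_of_ne_zero hk
  have hne : (1 : ℂ) - 𝐞 (∑ i, (k i : ℝ) * ω i) ≠ 0 := by
    rw [← norm_pos_iff]
    exact lt_of_lt_of_le (by positivity) (four_mul_le_norm_one_sub_fourierChar (hdio k hk))
  field_simp

end phiTerm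

theorem stmt1_general (ℓ : ℕ) (ν τ M δ : ℝ) (hν : 0 < ν) (hδ : 0 < δ)
    (ω : Fin ℓ → ℝ)
    (hdio : ∀ k : Fin ℓ → ℤ, k ≠ 0 → ∀ n : ℤ,
      (ν * (∑ i, |(k i : ℝ)|) ^ τ)⁻¹ ≤ |(∑ i, (k i : ℝ) * ω i) - (n : ℝ)|)
    (ηhat : (Fin ℓ → ℤ) → ℂ) (hη0 : ηhat 0 = 0)
    (hdecay : ∀ k : Fin ℓ → ℤ,
      ‖ηhat k‖ ≤ M * Real.exp (-δ * (∑ i, |(k i : ℝ)|)))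
    (η : (Fin ℓ → ℝ) → ℂ)
    (hηsum : ∀ θ : Fin ℓ → ℝ, HasSum (fun k : Fin ℓ → ℤ =>
      ηhat k * Complex.exp (((2 * Real.pi : ℝ) : ℂ) * Complex.I *
        ((∑ i, (k i : ℝ) * θ i : ℝ) : ℂ))) (η θ)) :
    ∃ φ : (Fin ℓ → ℝ) → ℂ,
      (∀ θ, Summable (fun k : Fin ℓ → ℤ => ‖phiTerm ℓ ηhat ω k θ‖)) ∧
      (∀ θ, HasSum (fun k : Fin ℓ → ℤ => phiTerm ℓ ηhat ω k θ) (φ θ)) ∧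
      TendstoUniformly
        (fun (s : Finset (Fin ℓ → ℤ)) (θ : Fin ℓ → ℝ) => ∑ k ∈ s, phiTerm ℓ ηhat ω k θ)
        φ Filter.atTop ∧
      Continuous φ ∧
      (∀ (θ : Fin ℓ → ℝ) (e : Fin ℓ → ℤ), φ (θ + fun i => (e i : ℝ)) = φ θ) ∧
      (∀ θ, φ θ - φ (θ + ω) = η θ) := by
  have hM : 0 ≤ M := by simpa using (norm_nonneg _).trans (hdecay 0)
  have hbound := norm_phiTerm_le hν hdio hM hδ hdecay
  have hmajorant := (summable_exp_neg_mul_sum_abs ℓ (half_pos hδ)).mul_left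
    (M * ν / 4 * (⌈τ⌉₊.factorial * (2 / δ) ^ ⌈τ⌉₊))
  have habs θ : Summable fun k => ‖phiTerm ℓ ηhat ω k θ‖ :=
    hmajorant.of_nonneg_of_le (fun _ => norm_nonneg _) (hbound · θ)
  have hsum θ := (habs θ).of_norm.hasSum
  refine ⟨fun θ => ∑' k, phiTerm ℓ ηhat ω k θ, habs, hsum, tendstoUniformly_tsum hmajorant hbound,
    continuous_tsum continuous_phiTerm hmajorant hbound,
    fun θ e => tsum_congr fun k => phiTerm_add_intCast k e θ, fun θ => ?_⟩
  refine HasSum.unique ?_ (hηsum θ)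
  simpa only [phiTerm_sub_phiTerm_add hν hdio hη0] using (hsum θ).sub (hsum (θ + ω))

/-- For a Diophantine frequency `ω ∈ D(ν,τ)` and a function `η` given by
an absolutely convergent Fourier series with zero average and exponentially decaying
coefficients, the series `φ(θ) = Σ_{k≠0} η̂_k (1 − e^{2πi k·ω})⁻¹ e^{2πi k·θ}` converges
absolutely and uniformly, defines a continuous `ℤ^ℓ`-periodic function, and solves
`φ(θ) − φ(θ+ω) = η(θ)`.  (Since `η̂_0 = 0` and Lean's junk value conventions make the
`k = 0` term vanish, the sum may be taken over all of `ℤ^ℓ`.) -/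
theorem stmt1 (ℓ : ℕ) (ν τ M δ : ℝ) (hν : 0 < ν) (hM : 0 < M) (hδ : 0 < δ)
    (ω : Fin ℓ → ℝ)
    (hdio : ∀ k : Fin ℓ → ℤ, k ≠ 0 → ∀ n : ℤ,
      (ν * (∑ i, |(k i : ℝ)|) ^ τ)⁻¹ ≤ |(∑ i, (k i : ℝ) * ω i) - (n : ℝ)|)
    (ηhat : (Fin ℓ → ℤ) → ℂ) (hη0 : ηhat 0 = 0)
    (hdecay : ∀ k : Fin ℓ → ℤ,
      ‖ηhat k‖ ≤ M * Real.exp (-δ * (∑ i, |(k i : ℝ)|)))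
    (η : (Fin ℓ → ℝ) → ℂ)
    (hηsum : ∀ θ : Fin ℓ → ℝ, HasSum (fun k : Fin ℓ → ℤ =>
      ηhat k * Complex.exp (((2 * Real.pi : ℝ) : ℂ) * Complex.I *
        ((∑ i, (k i : ℝ) * θ i : ℝ) : ℂ))) (η θ)) :
    ∃ φ : (Fin ℓ → ℝ) → ℂ,
      (∀ θ, Summable (fun k : Fin ℓ → ℤ => ‖phiTerm ℓ ηhat ω k θ‖)) ∧
      (∀ θ, HasSum (fun k : Fin ℓ → ℤ => phiTerm ℓ ηhat ω k θ) (φ θ)) ∧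
      TendstoUniformly
        (fun (s : Finset (Fin ℓ → ℤ)) (θ : Fin ℓ → ℝ) => ∑ k ∈ s, phiTerm ℓ ηhat ω k θ)
        φ Filter.atTop ∧
      Continuous φ ∧
      (∀ (θ : Fin ℓ → ℝ) (e : Fin ℓ → ℤ), φ (θ + fun i => (e i : ℝ)) = φ θ) ∧
      (∀ θ, φ θ - φ (θ + ω) = η θ) :=
  stmt1_general ℓ ν τ M δ hν hδ ω hdio ηhat hη0 hdecay η hηsum
end

section
/- Let ω ∈ ℝ^ℓ; let A: ℝ^ℓ → GL(m,ℝ), B: ℝ^ℓ → M_{m'×m'}(ℝ) and η: ℝ^ℓ → M_{m×m'}(ℝ) be continuous and ℤ^ℓ-periodic with sup_θ ‖A(θ)^{−1}‖ · sup_θ ‖B(θ)‖ ≤ κ for some κ < 1. Then the series Δ(θ) = A(θ)^{−1} η(θ) + Σ_{k=1}^∞ A(θ)^{−1} A(θ+ω)^{−1} ··· A(θ+kω)^{−1} · η(θ+kω) · B(θ+(k−1)ω) ··· B(θ+ω) B(θ) converges absolutely and uniformly, defines a continuous ℤ^ℓ-periodic function, satisfies A(θ) Δ(θ) − Δ(θ+ω)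 B(θ) = η(θ) for all θ, and is the unique bounded solution of this equation. -/
/-- Backward inverse products: `invProd Ainv ω k θ = A(θ)⁻¹ A(θ+ω)⁻¹ ⋯ A(θ+kω)⁻¹`
(`k+1` factors). -/
noncomputable def invProd {ℓ m : ℕ}
    (Ainv : (Fin ℓ → ℝ) → (Fin m → ℝ) →L[ℝ] (Fin m → ℝ)) (ω : Fin ℓ → ℝ) :
    ℕ → (Fin ℓ → ℝ) → ((Fin m → ℝ) →L[ℝ] (Fin m → ℝ))
  | 0, θ => Ainv θ
  | k + 1, θ => (Ainv θ).comp (invProd Ainv ω k (θ + ω))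

/-- Forward products on the right factor: `bProd B ω k θ = B(θ+(k−1)ω) ⋯ B(θ+ω) B(θ)`,
with `bProd B ω 0 θ = Id`. -/
noncomputable def bProd {ℓ m' : ℕ}
    (B : (Fin ℓ → ℝ) → (Fin m' → ℝ) →L[ℝ] (Fin m' → ℝ)) (ω : Fin ℓ → ℝ) :
    ℕ → (Fin ℓ → ℝ) → ((Fin m' → ℝ) →L[ℝ] (Fin m' → ℝ))
  | 0, _ => 1
  | k + 1, θ => (B (θ + (k : ℝ) • ω)).comp (bProd B ω k θ)

/-- The `k`-th term `A(θ)⁻¹ ⋯ A(θ+kω)⁻¹ η(θ+kω) B(θ+(k−1)ω) ⋯ B(θ)` of the series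
solving the twisted cohomology equation `A Δ − (Δ∘T_ω) B = η`. -/
noncomputable def twistTerm {ℓ m m' : ℕ}
    (Ainv : (Fin ℓ → ℝ) → (Fin m → ℝ) →L[ℝ] (Fin m → ℝ))
    (B : (Fin ℓ → ℝ) → (Fin m' → ℝ) →L[ℝ] (Fin m' → ℝ))
    (η : (Fin ℓ → ℝ) → (Fin m' → ℝ) →L[ℝ] (Fin m → ℝ)) (ω : Fin ℓ → ℝ)
    (k : ℕ) (θ : Fin ℓ → ℝ) : (Fin m' → ℝ) →L[ℝ] (Fin m → ℝ) :=
  ((invProd Ainv ω k θ).comp (η (θ + (k : ℝ) • ω))).comp (bProd B ω k θ)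

/-!
Every term of the series is bounded by `sup ‖A⁻¹‖ · sup ‖η‖ · (ab)ᵏ` with `ab ≤ κ < 1`
(`η` is bounded, being continuous and periodic), so the Weierstrass M-test gives absolute and
uniform convergence, continuity and periodicity of the sum. The equation holds because
`A(θ)` applied to the `(k+1)`-st term at `θ` is the `k`-th term at `θ + ω` composed with `B(θ)`,
so that `A Δ` telescopes against `(Δ ∘ T_ω) B`, leaving the `0`-th term `η`. The difference `D`
of two bounded solutions satisfies `D(θ) = A(θ)⁻¹ D(θ+ω) B(θ)`, hence `‖D‖ ≤ (ab)ⁿ sup ‖D‖` for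
all `n`, i.e. `D = 0`.
-/

open Filter Topology ContinuousLinearMap
open Function (Periodic)

theorem eq_zero_of_norm_le_mul_norm_comp {α E : Type*} [NormedAddCommGroup E] {f : α → E}
    {T : α → α} {κ c : ℝ} (hκ₀ : 0 ≤ κ) (hκ : κ < 1) (hc : ∀ x, ‖f x‖ ≤ c)
    (hf : ∀ x, ‖f x‖ ≤ κ * ‖f (T x)‖) : f = 0 := by
  have hiter : ∀ n x, ‖f x‖ ≤ κ ^ n * c := by
    intro n
    induction n with
    | zero => simpa using hc
    | succ n ih =>
      intro x
      calc ‖f x‖ ≤ κ * ‖f (T x)‖ := hf x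
        _ ≤ κ * (κ ^ n * c) := mul_le_mul_of_nonneg_left (ih _) hκ₀
        _ = κ ^ (n + 1) * c := by ring
  have hlim : Tendsto (fun n => κ ^ n * c) atTop (𝓝 0) := by
    simpa using (tendsto_pow_atTop_nhds_zero_of_lt_one hκ₀ hκ).mul_const c
  funext x
  exact norm_le_zero_iff.mp (ge_of_tendsto' hlim fun n => hiter n x)

theorem exists_norm_le_of_continuous_of_periodic {ι E : Type*} [SeminormedAddCommGroup E]
    {f : (ι → ℝ) → E} (hf : Continuous f) (hper : ∀ e : ι → ℤ, Periodic f fun i => (e i : ℝ)) :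
    ∃ C, ∀ θ, ‖f θ‖ ≤ C := by
  obtain ⟨C, hC⟩ := (isCompact_Icc (a := (0 : ι → ℝ)) (b := 1)).exists_bound_of_continuousOn
    hf.continuousOn
  refine ⟨C, fun θ => ?_⟩
  have hfract : f θ = f fun i => Int.fract (θ i) := by
    calc f θ = f ((fun i => Int.fract (θ i)) + fun i => (⌊θ i⌋ : ℝ)) := by
          congr 1
          funext i
          simp
      _ = f fun i => Int.fract (θ i) := hper _ _
  rw [hfract]
  exact hC _ ⟨fun i => Int.fract_nonneg _, fun i => (Int.fract_lt_one _).le⟩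

theorem add_add_natCast_smul {R V : Type*} [Semiring R] [AddCommMonoid V] [Module R V]
    (θ ω : V) (k : ℕ) : θ + ω + (k : R) • ω = θ + ((k + 1 : ℕ) : R) • ω := by
  rw [Nat.cast_succ, add_smul, one_smul, add_assoc, add_comm ω]

theorem Function.Periodic.of_mul_eq_one {α M : Type*} [Add α] [Monoid M] {f g : α → M} {p : α}
    (hf : Periodic f p) (hfg : ∀ x, f x * g x = 1) (hgf : ∀ x, g x * f x = 1) :
    Periodic g p := fun x =>
  left_inv_eq_right_inv (hgf (x + p)) (by rw [hf]; exact hfg x)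

section TwistedSeries

variable {ℓ m m' : ℕ} {ω : Fin ℓ → ℝ}
  {A Ainv : (Fin ℓ → ℝ) → (Fin m → ℝ) →L[ℝ] (Fin m → ℝ)}
  {B : (Fin ℓ → ℝ) → (Fin m' → ℝ) →L[ℝ] (Fin m' → ℝ)}
  {η : (Fin ℓ → ℝ) → (Fin m' → ℝ) →L[ℝ] (Fin m → ℝ)}

theorem norm_invProd_le {a : ℝ} (ha : ∀ θ, ‖Ainv θ‖ ≤ a) (k : ℕ) (θ : Fin ℓ → ℝ) :
    ‖invProd Ainv ω k θ‖ ≤ a ^ (k + 1) := by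
  induction k generalizing θ with
  | zero => simpa [invProd] using ha θ
  | succ k ih =>
    calc ‖invProd Ainv ω (k + 1) θ‖ ≤ ‖Ainv θ‖ * ‖invProd Ainv ω k (θ + ω)‖ := opNorm_comp_le _ _
      _ ≤ a * a ^ (k + 1) := mul_le_mul (ha θ) (ih _) (norm_nonneg _) ((norm_nonneg _).trans (ha θ))
      _ = a ^ (k + 1 + 1) := by ring

theorem norm_bProd_le {b : ℝ} (hb : ∀ θ, ‖B θ‖ ≤ b) (k : ℕ) (θ : Fin ℓ → ℝ) :
    ‖bProd B ω k θ‖ ≤ b ^ k := by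
  induction k with
  | zero => simpa [bProd, one_def] using norm_id_le
  | succ k ih =>
    calc ‖bProd B ω (k + 1) θ‖ ≤ ‖B (θ + (k : ℝ) • ω)‖ * ‖bProd B ω k θ‖ := opNorm_comp_le _ _
      _ ≤ b * b ^ k := mul_le_mul (hb _) ih (norm_nonneg _) ((norm_nonneg _).trans (hb θ))
      _ = b ^ (k + 1) := by ring

theorem norm_twistTerm_le {a b C : ℝ} (ha : ∀ θ, ‖Ainv θ‖ ≤ a) (hb : ∀ θ, ‖B θ‖ ≤ b)
    (hη : ∀ θ, ‖η θ‖ ≤ C) (k : ℕ) (θ : Fin ℓ → ℝ) :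
    ‖twistTerm Ainv B η ω k θ‖ ≤ a * C * (a * b) ^ k := by
  have ha₀ : 0 ≤ a := (norm_nonneg _).trans (ha θ)
  have hC₀ : 0 ≤ C := (norm_nonneg _).trans (hη θ)
  calc ‖twistTerm Ainv B η ω k θ‖
      ≤ ‖invProd Ainv ω k θ‖ * ‖η (θ + (k : ℝ) • ω)‖ * ‖bProd B ω k θ‖ :=
        (opNorm_comp_le _ _).trans
          (mul_le_mul_of_nonneg_right (opNorm_comp_le _ _) (norm_nonneg _))
    _ ≤ a ^ (k + 1) * C * b ^ k := by
        gcongr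
        exacts [norm_invProd_le ha k θ, hη _, norm_bProd_le hb k θ]
    _ = a * C * (a * b) ^ k := by ring

theorem continuous_invProd (hAinv : Continuous Ainv) (k : ℕ) :
    Continuous (invProd Ainv ω k) := by
  induction k with
  | zero => exact hAinv
  | succ k ih => exact hAinv.clm_comp (ih.comp (continuous_add_const ω))

theorem continuous_bProd (hB : Continuous B) (k : ℕ) : Continuous (bProd B ω k) := by
  induction k with
  | zero => exact continuous_const
  | succ k ih => exact (hB.comp (continuous_add_const _)).clm_comp ih

theorem continuous_twistTerm (hAinv : Continuous Ainv) (hB : Continuous B) (hη : Continuous η)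
    (k : ℕ) : Continuous (twistTerm Ainv B η ω k) :=
  ((continuous_invProd hAinv k).clm_comp (hη.comp (continuous_add_const _))).clm_comp
    (continuous_bProd hB k)

theorem periodic_invProd {p : Fin ℓ → ℝ} (hAinv : Periodic Ainv p) (k : ℕ) :
    Periodic (invProd Ainv ω k) p := by
  induction k with
  | zero => exact hAinv
  | succ k ih =>
    intro θ
    simp only [invProd, hAinv θ, add_right_comm θ p ω, ih (θ + ω)]

theorem periodic_bProd {p : Fin ℓ → ℝ} (hB : Periodic B p) (k : ℕ) :
    Periodic (bProd B ω k) p := by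
  induction k with
  | zero => exact fun _ => rfl
  | succ k ih =>
    intro θ
    simp only [bProd, add_right_comm θ p, hB _, ih θ]

theorem periodic_twistTerm {p : Fin ℓ → ℝ} (hAinv : Periodic Ainv p) (hB : Periodic B p)
    (hη : Periodic η p) (k : ℕ) : Periodic (twistTerm Ainv B η ω k) p := by
  intro θ
  simp only [twistTerm, periodic_invProd hAinv k θ, periodic_bProd hB k θ,
    add_right_comm θ p, hη _]

theorem bProd_add_comp (k : ℕ) (θ : Fin ℓ → ℝ) :
    (bProd B ω k (θ + ω)).comp (B θ) = bProd B ω (k + 1) θ := by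
  induction k generalizing θ with
  | zero => simp [bProd, one_def]
  | succ k ih =>
    simp only [bProd] at ih ⊢
    rw [ContinuousLinearMap.comp_assoc, ih θ, add_add_natCast_smul]

theorem comp_twistTerm_zero (hA : ∀ θ, (A θ).comp (Ainv θ) = 1) (θ : Fin ℓ → ℝ) :
    (A θ).comp (twistTerm Ainv B η ω 0 θ) = η θ := by
  simp [twistTerm, invProd, bProd, ← ContinuousLinearMap.comp_assoc, hA θ, one_def]

theorem comp_twistTerm_succ (hA : ∀ θ, (A θ).comp (Ainv θ) = 1) (k : ℕ) (θ : Fin ℓ → ℝ) :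
    (A θ).comp (twistTerm Ainv B η ω (k + 1) θ) =
      (twistTerm Ainv B η ω k (θ + ω)).comp (B θ) := by
  simp only [twistTerm, invProd, ← bProd_add_comp k θ, ← ContinuousLinearMap.comp_assoc, hA θ,
    one_def, id_comp, add_add_natCast_smul]

theorem cohomology_eq_of_hasSum (hA : ∀ θ, (A θ).comp (Ainv θ) = 1)
    {Δ : (Fin ℓ → ℝ) → (Fin m' → ℝ) →L[ℝ] (Fin m → ℝ)}
    (hΔ : ∀ θ, HasSum (fun k => twistTerm Ainv B η ω k θ) (Δ θ)) (θ : Fin ℓ → ℝ) :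
    (A θ).comp (Δ θ) - (Δ (θ + ω)).comp (B θ) = η θ := by
  have hleft : HasSum (fun k => (A θ).comp (twistTerm Ainv B η ω k θ)) ((A θ).comp (Δ θ)) :=
    (compL ℝ (Fin m' → ℝ) (Fin m → ℝ) (Fin m → ℝ) (A θ)).hasSum (hΔ θ)
  have hright : HasSum (fun k => (A θ).comp (twistTerm Ainv B η ω (k + 1) θ))
      ((Δ (θ + ω)).comp (B θ)) := by
    simp only [comp_twistTerm_succ hA]
    exact ((compL ℝ (Fin m' → ℝ) (Fin m' → ℝ) (Fin m → ℝ)).flip (B θ)).hasSum (hΔ (θ + ω))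
  rw [hleft.unique ((hasSum_nat_add_iff 1).mp hright), Finset.sum_range_one,
    comp_twistTerm_zero hA, add_sub_cancel_left]

theorem eq_of_bounded_of_cohomology_eq (hA : ∀ θ, (Ainv θ).comp (A θ) = 1) {a b : ℝ}
    (ha : ∀ θ, ‖Ainv θ‖ ≤ a) (hb : ∀ θ, ‖B θ‖ ≤ b) (hab : a * b < 1)
    {Δ₁ Δ₂ : (Fin ℓ → ℝ) → (Fin m' → ℝ) →L[ℝ] (Fin m → ℝ)}
    (hΔ₁ : ∃ c, ∀ θ, ‖Δ₁ θ‖ ≤ c) (hΔ₂ : ∃ c, ∀ θ, ‖Δ₂ θ‖ ≤ c)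
    (h₁ : ∀ θ, (A θ).comp (Δ₁ θ) - (Δ₁ (θ + ω)).comp (B θ) = η θ)
    (h₂ : ∀ θ, (A θ).comp (Δ₂ θ) - (Δ₂ (θ + ω)).comp (B θ) = η θ) : Δ₁ = Δ₂ := by
  obtain ⟨c₁, hc₁⟩ := hΔ₁
  obtain ⟨c₂, hc₂⟩ := hΔ₂
  have ha₀ : 0 ≤ a := (norm_nonneg _).trans (ha 0)
  have hb₀ : 0 ≤ b := (norm_nonneg _).trans (hb 0)
  have hdiff : ∀ θ, Δ₁ θ - Δ₂ θ = (Ainv θ).comp ((Δ₁ (θ + ω) - Δ₂ (θ + ω)).comp (B θ)) := by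
    intro θ
    have hA_diff : (A θ).comp (Δ₁ θ - Δ₂ θ) = (Δ₁ (θ + ω) - Δ₂ (θ + ω)).comp (B θ) := by
      rw [comp_sub, sub_comp]
      exact sub_eq_sub_iff_sub_eq_sub.mp ((h₁ θ).trans (h₂ θ).symm)
    rw [← hA_diff, ← ContinuousLinearMap.comp_assoc, hA θ, one_def, id_comp]
  have hcontr : ∀ θ, ‖Δ₁ θ - Δ₂ θ‖ ≤ a * b * ‖Δ₁ (θ + ω) - Δ₂ (θ + ω)‖ := by
    intro θ
    rw [hdiff θ]
    calc _ ≤ ‖Ainv θ‖ * (‖Δ₁ (θ + ω) - Δ₂ (θ + ω)‖ * ‖B θ‖) :=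
          (opNorm_comp_le _ _).trans
            (mul_le_mul_of_nonneg_left (opNorm_comp_le _ _) (norm_nonneg _))
      _ ≤ a * (‖Δ₁ (θ + ω) - Δ₂ (θ + ω)‖ * b) := by gcongr; exacts [ha θ, hb θ]
      _ = a * b * ‖Δ₁ (θ + ω) - Δ₂ (θ + ω)‖ := by ring
  exact sub_eq_zero.mp <| eq_zero_of_norm_le_mul_norm_comp (T := (· + ω)) (mul_nonneg ha₀ hb₀)
    hab (fun θ => (norm_sub_le _ _).trans (add_le_add (hc₁ θ) (hc₂ θ))) hcontr

end TwistedSeries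

theorem stmt13_general (ℓ m m' : ℕ) (ω : Fin ℓ → ℝ)
    (A Ainv : (Fin ℓ → ℝ) → (Fin m → ℝ) →L[ℝ] (Fin m → ℝ))
    (B : (Fin ℓ → ℝ) → (Fin m' → ℝ) →L[ℝ] (Fin m' → ℝ))
    (η : (Fin ℓ → ℝ) → (Fin m' → ℝ) →L[ℝ] (Fin m → ℝ))
    (hAinvc : Continuous Ainv) (hBc : Continuous B)
    (hηc : Continuous η)
    (hAinv₁ : ∀ θ, (A θ).comp (Ainv θ) = 1) (hAinv₂ : ∀ θ, (Ainv θ).comp (A θ) = 1)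
    (hAper : ∀ (θ : Fin ℓ → ℝ) (e : Fin ℓ → ℤ), A (θ + fun i => (e i : ℝ)) = A θ)
    (hBper : ∀ (θ : Fin ℓ → ℝ) (e : Fin ℓ → ℤ), B (θ + fun i => (e i : ℝ)) = B θ)
    (hηper : ∀ (θ : Fin ℓ → ℝ) (e : Fin ℓ → ℤ), η (θ + fun i => (e i : ℝ)) = η θ)
    (a b κ : ℝ) (hκ : κ < 1)
    (ha : ∀ θ, ‖Ainv θ‖ ≤ a) (hb : ∀ θ, ‖B θ‖ ≤ b) (hab : a * b ≤ κ) :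
    ∃ Δ : (Fin ℓ → ℝ) → (Fin m' → ℝ) →L[ℝ] (Fin m → ℝ),
      (∀ θ, Summable fun k : ℕ => ‖twistTerm Ainv B η ω k θ‖) ∧
      (∀ θ, HasSum (fun k : ℕ => twistTerm Ainv B η ω k θ) (Δ θ)) ∧
      TendstoUniformly
        (fun (N : ℕ) (θ : Fin ℓ → ℝ) => ∑ k ∈ Finset.range N, twistTerm Ainv B η ω k θ)
        Δ Filter.atTop ∧
      Continuous Δ ∧
      (∀ (θ : Fin ℓ → ℝ) (e : Fin ℓ → ℤ), Δ (θ + fun i => (e i : ℝ)) = Δ θ) ∧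
      (∀ θ, (A θ).comp (Δ θ) - (Δ (θ + ω)).comp (B θ) = η θ) ∧
      (∀ Δ' : (Fin ℓ → ℝ) → (Fin m' → ℝ) →L[ℝ] (Fin m → ℝ),
        (∃ c : ℝ, ∀ θ, ‖Δ' θ‖ ≤ c) →
        (∀ θ, (A θ).comp (Δ' θ) - (Δ' (θ + ω)).comp (B θ) = η θ) → Δ' = Δ) := by
  obtain ⟨C, hC⟩ := exists_norm_le_of_continuous_of_periodic hηc fun e θ => hηper θ e
  have hab₁ : a * b < 1 := hab.trans_lt hκ
  have hab₀ : 0 ≤ a * b :=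
    mul_nonneg ((norm_nonneg _).trans (ha 0)) ((norm_nonneg _).trans (hb 0))
  have hu : HasSum (fun k => a * C * (a * b) ^ k) (a * C * (1 - a * b)⁻¹) :=
    (hasSum_geometric_of_lt_one hab₀ hab₁).mul_left _
  have hterm := norm_twistTerm_le (ω := ω) ha hb hC
  have hsum : ∀ θ, Summable fun k => ‖twistTerm Ainv B η ω k θ‖ := fun θ =>
    hu.summable.of_nonneg_of_le (fun _ => norm_nonneg _) (hterm · θ)
  have hΔ : ∀ θ, HasSum (fun k => twistTerm Ainv B η ω k θ) (∑' k, twistTerm Ainv B η ω k θ) :=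
    fun θ => (hsum θ).of_norm.hasSum
  have hsol := cohomology_eq_of_hasSum hAinv₁ hΔ
  refine ⟨_, hsum, hΔ, tendstoUniformly_tsum_nat hu.summable hterm,
    continuous_tsum (continuous_twistTerm hAinvc hBc hηc) hu.summable hterm, ?_, hsol, ?_⟩
  · intro θ e
    have hAinvper : Periodic Ainv fun i => (e i : ℝ) :=
      Periodic.of_mul_eq_one (fun θ => hAper θ e) hAinv₁ hAinv₂
    exact tsum_congr fun k =>
      periodic_twistTerm hAinvper (fun θ => hBper θ e) (fun θ => hηper θ e) k θ
  · rintro Δ' hΔ' hsol'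
    exact eq_of_bounded_of_cohomology_eq hAinv₂ ha hb hab₁ hΔ'
      ⟨_, fun θ => tsum_of_norm_bounded hu (hterm · θ)⟩ hsol' hsol

/-- If `A : ℝ^ℓ → GL(m,ℝ)`, `B : ℝ^ℓ → M_{m'×m'}(ℝ)` and
`η : ℝ^ℓ → M_{m×m'}(ℝ)` are continuous and `ℤ^ℓ`-periodic with
`sup ‖A⁻¹‖ · sup ‖B‖ ≤ κ < 1`, then the series
`Δ(θ) = Σ_{k≥0} A(θ)⁻¹ ⋯ A(θ+kω)⁻¹ η(θ+kω) B(θ+(k−1)ω) ⋯ B(θ)`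
converges absolutely and uniformly, defines a continuous `ℤ^ℓ`-periodic function,
solves `A(θ) Δ(θ) − Δ(θ+ω) B(θ) = η(θ)`, and is its unique bounded solution. -/
theorem stmt13 (ℓ m m' : ℕ) (ω : Fin ℓ → ℝ)
    (A Ainv : (Fin ℓ → ℝ) → (Fin m → ℝ) →L[ℝ] (Fin m → ℝ))
    (B : (Fin ℓ → ℝ) → (Fin m' → ℝ) →L[ℝ] (Fin m' → ℝ))
    (η : (Fin ℓ → ℝ) → (Fin m' → ℝ) →L[ℝ] (Fin m → ℝ))
    (hAc : Continuous A) (hAinvc : Continuous Ainv) (hBc : Continuous B)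
    (hηc : Continuous η)
    (hAinv₁ : ∀ θ, (A θ).comp (Ainv θ) = 1) (hAinv₂ : ∀ θ, (Ainv θ).comp (A θ) = 1)
    (hAper : ∀ (θ : Fin ℓ → ℝ) (e : Fin ℓ → ℤ), A (θ + fun i => (e i : ℝ)) = A θ)
    (hBper : ∀ (θ : Fin ℓ → ℝ) (e : Fin ℓ → ℤ), B (θ + fun i => (e i : ℝ)) = B θ)
    (hηper : ∀ (θ : Fin ℓ → ℝ) (e : Fin ℓ → ℤ), η (θ + fun i => (e i : ℝ)) = η θ)
    (a b κ : ℝ) (hκ : κ < 1)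
    (ha : ∀ θ, ‖Ainv θ‖ ≤ a) (hb : ∀ θ, ‖B θ‖ ≤ b) (hab : a * b ≤ κ) :
    ∃ Δ : (Fin ℓ → ℝ) → (Fin m' → ℝ) →L[ℝ] (Fin m → ℝ),
      (∀ θ, Summable fun k : ℕ => ‖twistTerm Ainv B η ω k θ‖) ∧
      (∀ θ, HasSum (fun k : ℕ => twistTerm Ainv B η ω k θ) (Δ θ)) ∧
      TendstoUniformly
        (fun (N : ℕ) (θ : Fin ℓ → ℝ) => ∑ k ∈ Finset.range N, twistTerm Ainv B η ω k θ)
        Δ Filter.atTop ∧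
      Continuous Δ ∧
      (∀ (θ : Fin ℓ → ℝ) (e : Fin ℓ → ℤ), Δ (θ + fun i => (e i : ℝ)) = Δ θ) ∧
      (∀ θ, (A θ).comp (Δ θ) - (Δ (θ + ω)).comp (B θ) = η θ) ∧
      (∀ Δ' : (Fin ℓ → ℝ) → (Fin m' → ℝ) →L[ℝ] (Fin m → ℝ),
        (∃ c : ℝ, ∀ θ, ‖Δ' θ‖ ≤ c) →
        (∀ θ, (A θ).comp (Δ' θ) - (Δ' (θ + ω)).comp (B θ) = η θ) → Δ' = Δ) :=
  stmt13_general ℓ m m' ω A Ainv B η hAinvc hBc hηc hAinv₁ hAinv₂ hAper hBper hηper a b κ hκ ha hb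
    hab
end

section
/- (Superexponential convergence of the doubling scheme.) In the setting where A: ℝ^ℓ → GL(m,ℝ), B: ℝ^ℓ → M_{m'×m'}(ℝ), η: ℝ^ℓ → M_{m×m'}(ℝ) are continuous, ℤ^ℓ-periodic, with a := sup_θ ‖A(θ)^{−1}‖ and b := sup_θ ‖B(θ)‖ satisfying ab ≤ κ < 1, define recursively α_0(θ) = A(θ)^{−1}, β_0(θ) = B(θ), h_0(θ) = A(θ)^{−1} η(θ), and for n ≥ 0: α_{n+1}(θ) = α_n(θ) α_n(θ + 2^n ω), β_{n+1}(θ) = β_n(θ + 2^n ω) β_n(θ), h_{n+1}(θ) = h_n(θ) + α_n(θ) h_n(θ + 2^n ω) β_n(θ). Then h_n converges uniformly to the unique bounded solution Δ of A(θ)Δ(θ) − Δ(θ+ω)B(θ) = η(θ), and sup_θ ‖Δ(θ) − h_n(θ)‖ ≤ a · (sup_θ ‖η(θ)‖) · κ^{2^n} / (1 − κ) for every n ≥ 0. -/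
/-!
The doubling iterates are partial sums of the Neumann series `Δ = ∑ₖ Tᵏ(A⁻¹η)` of the operator
`T X (θ) = A(θ)⁻¹ X(θ + ω) B(θ)`, whose norm on bounded functions is at most `ab ≤ κ < 1`:
by induction, `αₙ` and `βₙ` are the products of `2ⁿ` consecutive factors `A⁻¹` and `B`, so that
`αₙ(θ) Tᵏ(A⁻¹η)(θ + 2ⁿω) βₙ(θ) = T^{2ⁿ+k}(A⁻¹η)(θ)` and `hₙ = ∑_{k < 2ⁿ} Tᵏ(A⁻¹η)`.
The error bound is the geometric tail `∑_{k ≥ 2ⁿ} a e κᵏ`, and uniqueness holds because the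
difference `D` of two bounded solutions satisfies `D = T D`, so `sup ‖D‖ ≤ κᵏ sup ‖D‖ → 0`.
-/

open Filter Finset

section NeumannSeries

variable {Θ 𝕜 E F : Type*} [AddCommGroup Θ] [NontriviallyNormedField 𝕜]
  [NormedAddCommGroup E] [NormedSpace 𝕜 E] [NormedAddCommGroup F] [NormedSpace 𝕜 F]

theorem ContinuousLinearMap.norm_comp_comp_le_of_mul_le {f : E →L[𝕜] E} {g : F →L[𝕜] E}
    {h : F →L[𝕜] F} {a b c κ : ℝ} (hf : ‖f‖ ≤ a) (hh : ‖h‖ ≤ b) (hg : ‖g‖ ≤ c)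
    (hab : a * b ≤ κ) : ‖(f.comp g).comp h‖ ≤ κ * c := by
  have ha : 0 ≤ a := (norm_nonneg f).trans hf
  have hc : 0 ≤ c := (norm_nonneg g).trans hg
  calc ‖(f.comp g).comp h‖ ≤ ‖f‖ * ‖g‖ * ‖h‖ :=
        (opNorm_comp_le _ _).trans (mul_le_mul_of_nonneg_right (opNorm_comp_le _ _) (norm_nonneg _))
    _ ≤ a * c * b := by gcongr
    _ = a * b * c := by ring
    _ ≤ κ * c := mul_le_mul_of_nonneg_right hab hc

theorem nonneg_of_norm_le_of_mul_le {f : E →L[𝕜] E} {h : F →L[𝕜] F} {a b κ : ℝ} (hf : ‖f‖ ≤ a)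
    (hh : ‖h‖ ≤ b) (hab : a * b ≤ κ) : 0 ≤ κ :=
  (mul_nonneg ((norm_nonneg f).trans hf) ((norm_nonneg h).trans hh)).trans hab

variable (ω : Θ) (Ainv : Θ → E →L[𝕜] E) (B : Θ → F →L[𝕜] F) (η : Θ → F →L[𝕜] E)

/-- `neumannTerm k θ = A(θ)⁻¹ ⋯ A(θ+kω)⁻¹ η(θ+kω) B(θ+(k−1)ω) ⋯ B(θ)`. -/
def neumannTerm : ℕ → Θ → F →L[𝕜] E
  | 0, θ => (Ainv θ).comp (η θ)
  | k + 1, θ => ((Ainv θ).comp (neumannTerm k (θ + ω))).comp (B θ)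

noncomputable def neumannSeries (θ : Θ) : F →L[𝕜] E := ∑' k, neumannTerm ω Ainv B η k θ

variable {ω Ainv B η} {a b κ e : ℝ}

theorem norm_neumannTerm_le (hab : a * b ≤ κ) (ha : ∀ θ, ‖Ainv θ‖ ≤ a)
    (hb : ∀ θ, ‖B θ‖ ≤ b) (he : ∀ θ, ‖η θ‖ ≤ e) (k : ℕ) (θ : Θ) :
    ‖neumannTerm ω Ainv B η k θ‖ ≤ a * e * κ ^ k := by
  induction k generalizing θ with
  | zero =>
    simpa [neumannTerm] using (ContinuousLinearMap.opNorm_comp_le _ _).trans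
      (mul_le_mul (ha θ) (he θ) (norm_nonneg _) ((norm_nonneg _).trans (ha θ)))
  | succ k ih =>
    calc ‖neumannTerm ω Ainv B η (k + 1) θ‖ ≤ κ * (a * e * κ ^ k) :=
          ContinuousLinearMap.norm_comp_comp_le_of_mul_le (ha θ) (hb θ) (ih (θ + ω)) hab
      _ = a * e * κ ^ (k + 1) := by ring

theorem eq_zero_of_eq_comp_comp_of_bounded {D : Θ → F →L[𝕜] E} (hκ : κ < 1) (hab : a * b ≤ κ)
    (ha : ∀ θ, ‖Ainv θ‖ ≤ a) (hb : ∀ θ, ‖B θ‖ ≤ b)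
    (hD : ∀ θ, D θ = ((Ainv θ).comp (D (θ + ω))).comp (B θ)) (hbdd : ∃ c, ∀ θ, ‖D θ‖ ≤ c) :
    D = 0 := by
  obtain ⟨c, hc⟩ := hbdd
  funext θ
  have hiter : ∀ k θ, ‖D θ‖ ≤ κ ^ k * c := by
    intro k
    induction k with
    | zero => simpa using hc
    | succ k ih =>
      intro θ
      rw [hD θ]
      exact (ContinuousLinearMap.norm_comp_comp_le_of_mul_le (ha θ) (hb θ) (ih (θ + ω))
        hab).trans_eq (by ring)
  have hκ0 := nonneg_of_norm_le_of_mul_le (ha θ) (hb θ) hab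
  have hlim : Tendsto (fun k : ℕ => κ ^ k * c) atTop (nhds 0) := by
    simpa using (tendsto_pow_atTop_nhds_zero_of_lt_one hκ0 hκ).mul_const c
  exact norm_le_zero_iff.mp (ge_of_tendsto' hlim fun k => hiter k θ)

theorem eq_of_comp_sub_comp_eq {A : Θ → E →L[𝕜] E} {X Y : Θ → F →L[𝕜] E} (hκ : κ < 1)
    (hab : a * b ≤ κ) (ha : ∀ θ, ‖Ainv θ‖ ≤ a) (hb : ∀ θ, ‖B θ‖ ≤ b)
    (hA : ∀ θ, (Ainv θ).comp (A θ) = 1) (hXbdd : ∃ c, ∀ θ, ‖X θ‖ ≤ c)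
    (hYbdd : ∃ c, ∀ θ, ‖Y θ‖ ≤ c) (hX : ∀ θ, (A θ).comp (X θ) - (X (θ + ω)).comp (B θ) = η θ)
    (hY : ∀ θ, (A θ).comp (Y θ) - (Y (θ + ω)).comp (B θ) = η θ) : X = Y := by
  obtain ⟨cX, hcX⟩ := hXbdd
  obtain ⟨cY, hcY⟩ := hYbdd
  have hD : ∀ θ, (X - Y) θ = ((Ainv θ).comp ((X - Y) (θ + ω))).comp (B θ) := fun θ => by
    have hAD : (A θ).comp ((X - Y) θ) = ((X - Y) (θ + ω)).comp (B θ) := by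
      rw [Pi.sub_apply, Pi.sub_apply, ContinuousLinearMap.comp_sub, ContinuousLinearMap.sub_comp,
        sub_eq_sub_iff_sub_eq_sub, hX θ, hY θ]
    rw [ContinuousLinearMap.comp_assoc, ← hAD, ← ContinuousLinearMap.comp_assoc, hA θ,
      ContinuousLinearMap.one_def, ContinuousLinearMap.id_comp]
  have hbdd : ∃ c, ∀ θ, ‖(X - Y) θ‖ ≤ c := ⟨cX + cY, fun θ => (norm_sub_le _ _).trans
    (add_le_add (hcX θ) (hcY θ))⟩
  exact sub_eq_zero.mp (eq_zero_of_eq_comp_comp_of_bounded hκ hab ha hb hD hbdd)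

theorem comp_neumannTerm_succ {A : Θ → E →L[𝕜] E} (hA : ∀ θ, (A θ).comp (Ainv θ) = 1)
    (k : ℕ) (θ : Θ) :
    (A θ).comp (neumannTerm ω Ainv B η (k + 1) θ) =
      (neumannTerm ω Ainv B η k (θ + ω)).comp (B θ) := by
  rw [neumannTerm, ← ContinuousLinearMap.comp_assoc, ← ContinuousLinearMap.comp_assoc, hA θ,
    ContinuousLinearMap.one_def, ContinuousLinearMap.id_comp]

variable [CompleteSpace E]

theorem summable_neumannTerm (hκ : κ < 1) (hab : a * b ≤ κ) (ha : ∀ θ, ‖Ainv θ‖ ≤ a)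
    (hb : ∀ θ, ‖B θ‖ ≤ b) (he : ∀ θ, ‖η θ‖ ≤ e) (θ : Θ) :
    Summable (fun k => neumannTerm ω Ainv B η k θ) :=
  ((summable_geometric_of_lt_one (nonneg_of_norm_le_of_mul_le (ha θ) (hb θ) hab) hκ).mul_left
    (a * e)).of_norm_bounded (norm_neumannTerm_le hab ha hb he · θ)

theorem norm_neumannSeries_sub_sum_range_le (hκ : κ < 1) (hab : a * b ≤ κ)
    (ha : ∀ θ, ‖Ainv θ‖ ≤ a) (hb : ∀ θ, ‖B θ‖ ≤ b) (he : ∀ θ, ‖η θ‖ ≤ e) (N : ℕ) (θ : Θ) :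
    ‖neumannSeries ω Ainv B η θ - ∑ k ∈ range N, neumannTerm ω Ainv B η k θ‖ ≤
      a * e * κ ^ N / (1 - κ) := by
  have hgeom := (hasSum_geometric_of_lt_one (nonneg_of_norm_le_of_mul_le (ha θ) (hb θ) hab)
    hκ).mul_left (a * e * κ ^ N)
  have hbound : ∀ k, ‖neumannTerm ω Ainv B η (k + N) θ‖ ≤ a * e * κ ^ N * κ ^ k := fun k =>
    (norm_neumannTerm_le hab ha hb he (k + N) θ).trans_eq (by ring)
  rw [neumannSeries, ← (summable_neumannTerm hκ hab ha hb he θ).sum_add_tsum_nat_add N,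
    add_sub_cancel_left]
  exact (tsum_of_norm_bounded hgeom hbound).trans_eq (by ring)

theorem comp_neumannSeries_sub_comp {A : Θ → E →L[𝕜] E} (hκ : κ < 1) (hab : a * b ≤ κ)
    (ha : ∀ θ, ‖Ainv θ‖ ≤ a) (hb : ∀ θ, ‖B θ‖ ≤ b) (he : ∀ θ, ‖η θ‖ ≤ e)
    (hA : ∀ θ, (A θ).comp (Ainv θ) = 1) (θ : Θ) :
    (A θ).comp (neumannSeries ω Ainv B η θ) - (neumannSeries ω Ainv B η (θ + ω)).comp (B θ) =
      η θ := by
  have hleft := (summable_neumannTerm (ω := ω) hκ hab ha hb he θ).hasSum.mapL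
    (ContinuousLinearMap.compL 𝕜 F E E (A θ))
  have hright := (summable_neumannTerm (ω := ω) hκ hab ha hb he (θ + ω)).hasSum.mapL
    ((ContinuousLinearMap.compL 𝕜 F F E).flip (B θ))
  rw [← hasSum_nat_add_iff' 1] at hleft
  simp only [ContinuousLinearMap.compL_apply, ContinuousLinearMap.flip_apply,
    comp_neumannTerm_succ hA] at hleft hright
  rw [neumannSeries, neumannSeries, ← hleft.unique hright, range_one, sum_singleton, sub_sub_cancel,
    neumannTerm, ← ContinuousLinearMap.comp_assoc, hA θ, ContinuousLinearMap.one_def,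
    ContinuousLinearMap.id_comp]

end NeumannSeries

section Doubling

variable {Θ 𝕜 E F : Type*} [AddCommGroup Θ] [Module ℝ Θ] [NontriviallyNormedField 𝕜]
  [NormedAddCommGroup E] [NormedSpace 𝕜 E] [NormedAddCommGroup F] [NormedSpace 𝕜 F]
  {ω : Θ} {Ainv : Θ → E →L[𝕜] E} {B : Θ → F →L[𝕜] F} {η : Θ → F →L[𝕜] E}
  {αs : ℕ → Θ → E →L[𝕜] E} {βs : ℕ → Θ → F →L[𝕜] F} {hs : ℕ → Θ → F →L[𝕜] E}

theorem neumannTerm_two_pow_add (hα0 : ∀ θ, αs 0 θ = Ainv θ) (hβ0 : ∀ θ, βs 0 θ = B θ)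
    (hαrec : ∀ (n : ℕ) θ, αs (n + 1) θ = (αs n θ).comp (αs n (θ + (2 ^ n : ℝ) • ω)))
    (hβrec : ∀ (n : ℕ) θ, βs (n + 1) θ = (βs n (θ + (2 ^ n : ℝ) • ω)).comp (βs n θ))
    (n k : ℕ) (θ : Θ) :
    neumannTerm ω Ainv B η (2 ^ n + k) θ =
      ((αs n θ).comp (neumannTerm ω Ainv B η k (θ + (2 ^ n : ℝ) • ω))).comp (βs n θ) := by
  induction n generalizing k θ with
  | zero => simp only [hα0, hβ0, pow_zero, one_smul, add_comm 1 k, neumannTerm]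
  | succ n ih =>
    have hshift : θ + (2 ^ (n + 1) : ℝ) • ω = θ + (2 ^ n : ℝ) • ω + (2 ^ n : ℝ) • ω := by
      rw [add_assoc, ← add_smul, pow_succ, mul_two]
    rw [pow_succ, mul_two, add_assoc, ih, ih, hαrec, hβrec, hshift]
    simp only [ContinuousLinearMap.comp_assoc]

theorem doubling_eq_sum_range_neumannTerm (hα0 : ∀ θ, αs 0 θ = Ainv θ)
    (hβ0 : ∀ θ, βs 0 θ = B θ) (hh0 : ∀ θ, hs 0 θ = (Ainv θ).comp (η θ))
    (hαrec : ∀ (n : ℕ) θ, αs (n + 1) θ = (αs n θ).comp (αs n (θ + (2 ^ n : ℝ) • ω)))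
    (hβrec : ∀ (n : ℕ) θ, βs (n + 1) θ = (βs n (θ + (2 ^ n : ℝ) • ω)).comp (βs n θ))
    (hhrec : ∀ (n : ℕ) θ, hs (n + 1) θ =
      hs n θ + ((αs n θ).comp (hs n (θ + (2 ^ n : ℝ) • ω))).comp (βs n θ)) (n : ℕ) (θ : Θ) :
    hs n θ = ∑ k ∈ range (2 ^ n), neumannTerm ω Ainv B η k θ := by
  induction n generalizing θ with
  | zero => simp [hh0, neumannTerm]
  | succ n ih =>
    have hcomp_sum : ∀ (f : E →L[𝕜] E) (g : ℕ → F →L[𝕜] E) (h : F →L[𝕜] F),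
        (f.comp (∑ k ∈ range (2 ^ n), g k)).comp h = ∑ k ∈ range (2 ^ n), (f.comp (g k)).comp h :=
      fun f g h => map_sum (((ContinuousLinearMap.compL 𝕜 F F E).flip h).comp
        (ContinuousLinearMap.compL 𝕜 F E E f)) g _
    rw [hhrec, ih, ih, hcomp_sum, pow_succ, mul_two, sum_range_add]
    simp only [neumannTerm_two_pow_add hα0 hβ0 hαrec hβrec]

end Doubling

theorem stmt14_general (ℓ m m' : ℕ) (ω : Fin ℓ → ℝ)
    (A Ainv : (Fin ℓ → ℝ) → (Fin m → ℝ) →L[ℝ] (Fin m → ℝ))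
    (B : (Fin ℓ → ℝ) → (Fin m' → ℝ) →L[ℝ] (Fin m' → ℝ))
    (η : (Fin ℓ → ℝ) → (Fin m' → ℝ) →L[ℝ] (Fin m → ℝ))
    (hAinv₁ : ∀ θ, (A θ).comp (Ainv θ) = 1) (hAinv₂ : ∀ θ, (Ainv θ).comp (A θ) = 1)
    (a b κ e : ℝ) (hκ : κ < 1) (hab : a * b ≤ κ)
    (ha : ∀ θ, ‖Ainv θ‖ ≤ a) (hb : ∀ θ, ‖B θ‖ ≤ b) (he : ∀ θ, ‖η θ‖ ≤ e)
    (αs : ℕ → (Fin ℓ → ℝ) → (Fin m → ℝ) →L[ℝ] (Fin m → ℝ))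
    (βs : ℕ → (Fin ℓ → ℝ) → (Fin m' → ℝ) →L[ℝ] (Fin m' → ℝ))
    (hs : ℕ → (Fin ℓ → ℝ) → (Fin m' → ℝ) →L[ℝ] (Fin m → ℝ))
    (hα0 : ∀ θ, αs 0 θ = Ainv θ)
    (hβ0 : ∀ θ, βs 0 θ = B θ)
    (hh0 : ∀ θ, hs 0 θ = (Ainv θ).comp (η θ))
    (hαrec : ∀ (n : ℕ) θ, αs (n + 1) θ = (αs n θ).comp (αs n (θ + (2 ^ n : ℝ) • ω)))
    (hβrec : ∀ (n : ℕ) θ, βs (n + 1) θ = (βs n (θ + (2 ^ n : ℝ) • ω)).comp (βs n θ))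
    (hhrec : ∀ (n : ℕ) θ, hs (n + 1) θ =
      hs n θ + ((αs n θ).comp (hs n (θ + (2 ^ n : ℝ) • ω))).comp (βs n θ)) :
    ∃ Δ : (Fin ℓ → ℝ) → (Fin m' → ℝ) →L[ℝ] (Fin m → ℝ),
      (∀ θ, (A θ).comp (Δ θ) - (Δ (θ + ω)).comp (B θ) = η θ) ∧
      (∃ c : ℝ, ∀ θ, ‖Δ θ‖ ≤ c) ∧
      (∀ Δ' : (Fin ℓ → ℝ) → (Fin m' → ℝ) →L[ℝ] (Fin m → ℝ),
        (∃ c : ℝ, ∀ θ, ‖Δ' θ‖ ≤ c) →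
        (∀ θ, (A θ).comp (Δ' θ) - (Δ' (θ + ω)).comp (B θ) = η θ) → Δ' = Δ) ∧
      TendstoUniformly hs Δ Filter.atTop ∧
      (∀ (n : ℕ) (θ : Fin ℓ → ℝ), ‖Δ θ - hs n θ‖ ≤ a * e * κ ^ (2 ^ n) / (1 - κ)) := by
  have hbound (N : ℕ) := norm_neumannSeries_sub_sum_range_le (ω := ω) hκ hab ha hb he N
  have herror : ∀ (n : ℕ) θ, ‖neumannSeries ω Ainv B η θ - hs n θ‖ ≤
      a * e * κ ^ (2 ^ n) / (1 - κ) := fun n θ => by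
    rw [doubling_eq_sum_range_neumannTerm hα0 hβ0 hh0 hαrec hβrec hhrec]
    exact hbound _ θ
  have hbdd : ∃ c, ∀ θ, ‖neumannSeries ω Ainv B η θ‖ ≤ c :=
    ⟨a * e / (1 - κ), fun θ => by simpa using hbound 0 θ⟩
  have hκ0 := nonneg_of_norm_le_of_mul_le (ha 0) (hb 0) hab
  have hlim : Tendsto (fun n : ℕ => a * e * κ ^ (2 ^ n) / (1 - κ)) atTop (nhds 0) := by
    simpa using (((tendsto_pow_atTop_nhds_zero_of_lt_one hκ0 hκ).comp
      (tendsto_pow_atTop_atTop_of_one_lt one_lt_two)).const_mul (a * e)).div_const (1 - κ)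
  refine ⟨neumannSeries ω Ainv B η, comp_neumannSeries_sub_comp hκ hab ha hb he hAinv₁, hbdd,
    fun Δ' hΔ'bdd hΔ' => eq_of_comp_sub_comp_eq hκ hab ha hb hAinv₂ hΔ'bdd hbdd hΔ'
      (comp_neumannSeries_sub_comp hκ hab ha hb he hAinv₁), ?_, herror⟩
  rw [Metric.tendstoUniformly_iff]
  intro ε hε
  filter_upwards [hlim.eventually_lt_const hε] with n hn θ
  exact (dist_eq_norm _ _).trans_lt ((herror n θ).trans_lt hn)

/-- **Superexponential convergence of the doubling scheme.**
With `a := sup ‖A⁻¹‖`, `b := sup ‖B‖`, `ab ≤ κ < 1` and `e := sup ‖η‖`, define the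
doubling iterates `α₀ = A⁻¹`, `β₀ = B`, `h₀ = A⁻¹ η`,
`α_{n+1}(θ) = α_n(θ) α_n(θ+2ⁿω)`, `β_{n+1}(θ) = β_n(θ+2ⁿω) β_n(θ)`,
`h_{n+1}(θ) = h_n(θ) + α_n(θ) h_n(θ+2ⁿω) β_n(θ)`.  Then `h_n` converges uniformly to
the unique bounded solution `Δ` of `A(θ)Δ(θ) − Δ(θ+ω)B(θ) = η(θ)`, with
`sup_θ ‖Δ(θ) − h_n(θ)‖ ≤ a e κ^{2ⁿ}/(1−κ)` for every `n`. -/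
theorem stmt14 (ℓ m m' : ℕ) (ω : Fin ℓ → ℝ)
    (A Ainv : (Fin ℓ → ℝ) → (Fin m → ℝ) →L[ℝ] (Fin m → ℝ))
    (B : (Fin ℓ → ℝ) → (Fin m' → ℝ) →L[ℝ] (Fin m' → ℝ))
    (η : (Fin ℓ → ℝ) → (Fin m' → ℝ) →L[ℝ] (Fin m → ℝ))
    (hAc : Continuous A) (hAinvc : Continuous Ainv) (hBc : Continuous B)
    (hηc : Continuous η)
    (hAinv₁ : ∀ θ, (A θ).comp (Ainv θ) = 1) (hAinv₂ : ∀ θ, (Ainv θ).comp (A θ) = 1)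
    (hAper : ∀ (θ : Fin ℓ → ℝ) (e : Fin ℓ → ℤ), A (θ + fun i => (e i : ℝ)) = A θ)
    (hBper : ∀ (θ : Fin ℓ → ℝ) (e : Fin ℓ → ℤ), B (θ + fun i => (e i : ℝ)) = B θ)
    (hηper : ∀ (θ : Fin ℓ → ℝ) (e : Fin ℓ → ℤ), η (θ + fun i => (e i : ℝ)) = η θ)
    (a b κ e : ℝ) (hκ : κ < 1) (hab : a * b ≤ κ)
    (ha : ∀ θ, ‖Ainv θ‖ ≤ a) (hb : ∀ θ, ‖B θ‖ ≤ b) (he : ∀ θ, ‖η θ‖ ≤ e)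
    (αs : ℕ → (Fin ℓ → ℝ) → (Fin m → ℝ) →L[ℝ] (Fin m → ℝ))
    (βs : ℕ → (Fin ℓ → ℝ) → (Fin m' → ℝ) →L[ℝ] (Fin m' → ℝ))
    (hs : ℕ → (Fin ℓ → ℝ) → (Fin m' → ℝ) →L[ℝ] (Fin m → ℝ))
    (hα0 : ∀ θ, αs 0 θ = Ainv θ)
    (hβ0 : ∀ θ, βs 0 θ = B θ)
    (hh0 : ∀ θ, hs 0 θ = (Ainv θ).comp (η θ))
    (hαrec : ∀ (n : ℕ) θ, αs (n + 1) θ = (αs n θ).comp (αs n (θ + (2 ^ n : ℝ) • ω)))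
    (hβrec : ∀ (n : ℕ) θ, βs (n + 1) θ = (βs n (θ + (2 ^ n : ℝ) • ω)).comp (βs n θ))
    (hhrec : ∀ (n : ℕ) θ, hs (n + 1) θ =
      hs n θ + ((αs n θ).comp (hs n (θ + (2 ^ n : ℝ) • ω))).comp (βs n θ)) :
    ∃ Δ : (Fin ℓ → ℝ) → (Fin m' → ℝ) →L[ℝ] (Fin m → ℝ),
      (∀ θ, (A θ).comp (Δ θ) - (Δ (θ + ω)).comp (B θ) = η θ) ∧
      (∃ c : ℝ, ∀ θ, ‖Δ θ‖ ≤ c) ∧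
      (∀ Δ' : (Fin ℓ → ℝ) → (Fin m' → ℝ) →L[ℝ] (Fin m → ℝ),
        (∃ c : ℝ, ∀ θ, ‖Δ' θ‖ ≤ c) →
        (∀ θ, (A θ).comp (Δ' θ) - (Δ' (θ + ω)).comp (B θ) = η θ) → Δ' = Δ) ∧
      TendstoUniformly hs Δ Filter.atTop ∧
      (∀ (n : ℕ) (θ : Fin ℓ → ℝ), ‖Δ θ - hs n θ‖ ≤ a * e * κ ^ (2 ^ n) / (1 - κ)) :=
  stmt14_general ℓ m m' ω A Ainv B η hAinv₁ hAinv₂ a b κ e hκ hab ha hb he αs βs hs hα0 hβ0 hh0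
    hαrec hβrec hhrec
end

section
/- Let J be a constant antisymmetric 2d×2d real matrix, F: ℝ^{2d} → ℝ^{2d} C¹ with DF(x)^T J DF(x) = J for all x, ω ∈ ℝ^ℓ, and 0 < |μ| < 1. Let W: ℝ^ℓ × [−1,1] → ℝ^{2d} be C¹, ℤ^ℓ-periodic in the first variable, and satisfy the whisker invariance equation F(W(θ,s)) = W(θ+ω, μs) for all (θ,s) ∈ ℝ^ℓ × [−1,1]. Assume the torus is isotropic: D_θW(θ,0)^T J D_θW(θ,0) = 0 for all θ. Then for every (θ,s) ∈ ℝ^ℓ × [−1,1]: (i) D_θW(θ,s)^T J D_θW(θ,s) = 0, and (ii) D_θW(θ,s)^T J ∂_s W(θ,s) = 0. -/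
open Matrix

/-- The Jacobian matrix of a map `f : ℝ^n → ℝ^m` at `x`, with entries
`(∂f_i/∂x_j)(x)`. -/
noncomputable def jacobian {n m : ℕ} (f : (Fin n → ℝ) → Fin m → ℝ) (x : Fin n → ℝ) :
    Matrix (Fin m) (Fin n) ℝ :=
  fun i j => fderiv ℝ f x (Pi.single j 1) i

/-- The `2d×ℓ` matrix of partial derivatives in `θ` of a whisker
parameterization `W(θ,s)`. -/
noncomputable def DthetaW {ℓ D : ℕ} (W : (Fin ℓ → ℝ) → ℝ → Fin D → ℝ)
    (θ : Fin ℓ → ℝ) (s : ℝ) : Matrix (Fin D) (Fin ℓ) ℝ :=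
  fun i j => fderiv ℝ (fun θ' => W θ' s i) θ (Pi.single j 1)

/-- The partial derivative in `s` of a whisker parameterization `W(θ,s)`. -/
noncomputable def DsW {ℓ D : ℕ} (W : (Fin ℓ → ℝ) → ℝ → Fin D → ℝ)
    (θ : Fin ℓ → ℝ) (s : ℝ) : Fin D → ℝ :=
  fun i => deriv (fun s' => W θ s' i) s

/-!
Differentiating the invariance equation in `θ` and in `s` gives
`DF · D_θW(θ,s) = D_θW(θ+ω, μs)` and `DF · ∂_sW(θ,s) = μ ∂_sW(θ+ω, μs)`. Since `F` preserves `J`,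
the form `Ω = D_θWᵀ J D_θW` satisfies `Ω(θ,s) = Ω(θ+ω, μs)` and the vector
`v = D_θWᵀ J ∂_sW` satisfies `v(θ,s) = μ v(θ+ω, μs)`. Along the orbit `(θ+nω, μⁿs)` the angles
have, modulo `ℤ^ℓ`, a convergent subsequence while `μⁿs → 0`, so by continuity and periodicity
`Ω(θ,s)` equals a value of `Ω` on the isotropic torus `s = 0`, that is `0`, and
`v(θ,s) = μⁿ v(θ+nω, μⁿs)` tends to `0` along that subsequence.
-/

open Filter Topology Set

section Jacobian

variable {n m : ℕ}

theorem jacobian_eq_toMatrix' (f : (Fin n → ℝ) → Fin m → ℝ) (x : Fin n → ℝ) :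
    jacobian f x = LinearMap.toMatrix' (fderiv ℝ f x : (Fin n → ℝ) →ₗ[ℝ] Fin m → ℝ) := by
  ext i j
  rfl

theorem jacobian_mulVec (f : (Fin n → ℝ) → Fin m → ℝ) (x v : Fin n → ℝ) :
    jacobian f x *ᵥ v = fderiv ℝ f x v := by
  rw [jacobian_eq_toMatrix', LinearMap.toMatrix'_mulVec]
  rfl

theorem jacobian_comp {k : ℕ} {f : (Fin m → ℝ) → Fin k → ℝ} {g : (Fin n → ℝ) → Fin m → ℝ}
    {x : Fin n → ℝ} (hf : DifferentiableAt ℝ f (g x)) (hg : DifferentiableAt ℝ g x) :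
    jacobian (f ∘ g) x = jacobian f (g x) * jacobian g x := by
  rw [jacobian_eq_toMatrix', jacobian_eq_toMatrix', jacobian_eq_toMatrix', fderiv_comp x hf hg,
    ← LinearMap.toMatrix'_comp]
  rfl

theorem jacobian_comp_add_right (f : (Fin n → ℝ) → Fin m → ℝ) (x a : Fin n → ℝ) :
    jacobian (fun y => f (y + a)) x = jacobian f (x + a) := by
  ext i j
  simp only [jacobian]
  rw [fderiv_comp_add_right]

end Jacobian

section Whisker

variable {ℓ D : ℕ} {W : (Fin ℓ → ℝ) → ℝ → Fin D → ℝ} {θ : Fin ℓ → ℝ} {s : ℝ}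

theorem DthetaW_eq_jacobian (h : DifferentiableAt ℝ (fun θ' => W θ' s) θ) :
    DthetaW W θ s = jacobian (fun θ' => W θ' s) θ := by
  ext i j
  simp [DthetaW, jacobian, fderiv_apply h]

theorem DsW_eq_deriv (h : DifferentiableAt ℝ (W θ) s) : DsW W θ s = deriv (W θ) s := by
  rw [deriv_pi (differentiableAt_pi.1 h)]
  rfl

theorem hasFDerivAt_theta_slice
    (h : DifferentiableAt ℝ (fun p : (Fin ℓ → ℝ) × ℝ => W p.1 p.2) (θ, s)) :
    HasFDerivAt (fun θ' => W θ' s)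
      ((fderiv ℝ (fun p : (Fin ℓ → ℝ) × ℝ => W p.1 p.2) (θ, s)).comp
        (ContinuousLinearMap.inl ℝ (Fin ℓ → ℝ) ℝ)) θ :=
  h.hasFDerivAt.comp (f := fun θ' => (θ', s)) θ (hasFDerivAt_prodMk_left θ s)

theorem hasDerivAt_s_slice
    (h : DifferentiableAt ℝ (fun p : (Fin ℓ → ℝ) × ℝ => W p.1 p.2) (θ, s)) :
    HasDerivAt (W θ) (fderiv ℝ (fun p : (Fin ℓ → ℝ) × ℝ => W p.1 p.2) (θ, s) (0, 1)) s :=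
  h.hasFDerivAt.comp_hasDerivAt s ((hasDerivAt_const s θ).prodMk (hasDerivAt_id s))

theorem DthetaW_apply_eq_fderiv
    (h : DifferentiableAt ℝ (fun p : (Fin ℓ → ℝ) × ℝ => W p.1 p.2) (θ, s)) (i : Fin D)
    (j : Fin ℓ) :
    DthetaW W θ s i j =
      fderiv ℝ (fun p : (Fin ℓ → ℝ) × ℝ => W p.1 p.2) (θ, s) (Pi.single j 1, 0) i := by
  rw [DthetaW_eq_jacobian (hasFDerivAt_theta_slice h).differentiableAt]
  simp [jacobian, (hasFDerivAt_theta_slice h).fderiv]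

theorem DsW_eq_fderiv (h : DifferentiableAt ℝ (fun p : (Fin ℓ → ℝ) × ℝ => W p.1 p.2) (θ, s)) :
    DsW W θ s = fderiv ℝ (fun p : (Fin ℓ → ℝ) × ℝ => W p.1 p.2) (θ, s) (0, 1) := by
  rw [DsW_eq_deriv (hasDerivAt_s_slice h).differentiableAt, (hasDerivAt_s_slice h).deriv]

theorem continuous_DthetaW (hW : ContDiff ℝ 1 (fun p : (Fin ℓ → ℝ) × ℝ => W p.1 p.2)) :
    Continuous fun p : (Fin ℓ → ℝ) × ℝ => DthetaW W p.1 p.2 := by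
  refine continuous_pi fun i => continuous_pi fun j => ?_
  simp only [DthetaW_apply_eq_fderiv (hW.differentiable one_ne_zero _)]
  exact (continuous_apply i).comp ((hW.continuous_fderiv one_ne_zero).clm_apply continuous_const)

theorem continuous_DsW (hW : ContDiff ℝ 1 (fun p : (Fin ℓ → ℝ) × ℝ => W p.1 p.2)) :
    Continuous fun p : (Fin ℓ → ℝ) × ℝ => DsW W p.1 p.2 := by
  simp only [DsW_eq_fderiv (hW.differentiable one_ne_zero _)]
  exact (hW.continuous_fderiv one_ne_zero).clm_apply continuous_const

theorem DthetaW_add_period {a : Fin ℓ → ℝ} (h : ∀ θ s, W (θ + a) s = W θ s) :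
    DthetaW W (θ + a) s = DthetaW W θ s := by
  ext i j
  change fderiv ℝ (fun θ' => W θ' s i) (θ + a) _ = fderiv ℝ (fun θ' => W θ' s i) θ _
  rw [← fderiv_comp_add_right]
  simp only [h]

theorem DsW_add_period {a : Fin ℓ → ℝ} (h : ∀ θ s, W (θ + a) s = W θ s) :
    DsW W (θ + a) s = DsW W θ s := by
  unfold DsW
  simp only [h]

variable {F : (Fin D → ℝ) → Fin D → ℝ} {ω : Fin ℓ → ℝ} {μ : ℝ}

theorem jacobian_mul_DthetaW_of_invariant (hF : DifferentiableAt ℝ F (W θ s))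
    (hW : Differentiable ℝ (fun p : (Fin ℓ → ℝ) × ℝ => W p.1 p.2))
    (hinv : ∀ θ', F (W θ' s) = W (θ' + ω) (μ * s)) :
    jacobian F (W θ s) * DthetaW W θ s = DthetaW W (θ + ω) (μ * s) := by
  have hWθ := (hasFDerivAt_theta_slice (hW (θ, s))).differentiableAt
  rw [DthetaW_eq_jacobian hWθ,
    DthetaW_eq_jacobian (hasFDerivAt_theta_slice (hW (θ + ω, μ * s))).differentiableAt,
    ← jacobian_comp hF hWθ, ← jacobian_comp_add_right]
  exact congrArg (jacobian · θ) (funext hinv)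

theorem jacobian_mulVec_DsW_of_invariant (hF : DifferentiableAt ℝ F (W θ s))
    (hW : Differentiable ℝ (fun p : (Fin ℓ → ℝ) × ℝ => W p.1 p.2)) (hs : s ∈ Icc (-1 : ℝ) 1)
    (hinv : ∀ t ∈ Icc (-1 : ℝ) 1, F (W θ t) = W (θ + ω) (μ * t)) :
    jacobian F (W θ s) *ᵥ DsW W θ s = μ • DsW W (θ + ω) (μ * s) := by
  have hWs := (hasDerivAt_s_slice (hW (θ, s))).differentiableAt
  have hWs' := (hasDerivAt_s_slice (hW (θ + ω, μ * s))).differentiableAt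
  rw [jacobian_mulVec, DsW_eq_deriv hWs, DsW_eq_deriv hWs']
  -- The invariance equation holds only for `t ∈ [-1, 1]`, so at `s = ±1` the two sides can only
  -- be compared through their one-sided derivatives within `Icc`, which are unique there.
  have hL : HasDerivWithinAt (fun t => W (θ + ω) (μ * t))
      (fderiv ℝ F (W θ s) (deriv (W θ) s)) (Icc (-1) 1) s :=
    (hF.hasFDerivAt.comp_hasDerivAt s hWs.hasDerivAt).hasDerivWithinAt.congr
      (fun t ht => (hinv t ht).symm) (hinv s hs).symm
  have hR : HasDerivWithinAt (fun t => W (θ + ω) (μ * t))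
      (μ • deriv (W (θ + ω)) (μ * s)) (Icc (-1) 1) s := by
    have hmul : HasDerivAt (fun t : ℝ => μ * t) μ s := by
      simpa using (hasDerivAt_id s).const_mul μ
    exact (hWs'.hasDerivAt.scomp s hmul).hasDerivWithinAt
  exact (uniqueDiffOn_Icc (by norm_num) s hs).eq_deriv _ hL hR

end Whisker

section Symplectic

variable {R : Type*} [CommRing R] {n k : Type*} [Fintype n] {M J : Matrix n n R}

theorem transpose_mul_mul_eq_of_preserves (hM : Mᵀ * J * M = J) (A B : Matrix n k R) :
    (M * A)ᵀ * J * (M * B) = Aᵀ * J * B := by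
  conv_rhs => rw [← hM]
  rw [transpose_mul]
  simp only [Matrix.mul_assoc]

theorem transpose_mulVec_mulVec_eq_of_preserves (hM : Mᵀ * J * M = J) (A : Matrix n k R)
    (v : n → R) : (M * A)ᵀ *ᵥ (J *ᵥ (M *ᵥ v)) = Aᵀ *ᵥ (J *ᵥ v) := by
  conv_rhs => rw [← hM]
  rw [transpose_mul]
  simp only [mulVec_mulVec, Matrix.mul_assoc]

end Symplectic

theorem mul_mem_Icc_neg_one_one {μ s : ℝ} (hμ : |μ| ≤ 1) (hs : s ∈ Icc (-1 : ℝ) 1) :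
    μ * s ∈ Icc (-1 : ℝ) 1 := by
  rw [mem_Icc, ← abs_le] at hs ⊢
  rw [abs_mul]
  exact mul_le_one₀ hμ (abs_nonneg s) hs

theorem eq_pow_smul_of_eq_smul {V E : Type*} [AddMonoid V] [AddCommMonoid E] [Module ℝ E]
    {g : V → ℝ → E} {ω : V} {μ c : ℝ} (hμ : |μ| ≤ 1)
    (hg : ∀ θ, ∀ s ∈ Icc (-1 : ℝ) 1, g θ s = c • g (θ + ω) (μ * s)) (n : ℕ) :
    ∀ θ, ∀ s ∈ Icc (-1 : ℝ) 1, g θ s = c ^ n • g (θ + n • ω) (μ ^ n * s) := by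
  induction n with
  | zero => simp
  | succ n ih =>
    intro θ s hs
    rw [hg θ s hs, ih (θ + ω) (μ * s) (mul_mem_Icc_neg_one_one hμ hs), smul_smul,
      succ_nsmul', add_assoc, pow_succ', pow_succ, mul_assoc]

section Periodic

variable {ℓ : ℕ} {E : Type*} [TopologicalSpace E] {g : (Fin ℓ → ℝ) → ℝ → E}

theorem exists_subseq_tendsto_of_periodic (hg : Continuous fun p : (Fin ℓ → ℝ) × ℝ => g p.1 p.2)
    (hper : ∀ (θ : Fin ℓ → ℝ) (e : Fin ℓ → ℤ) (s : ℝ), g (θ + fun i => (e i : ℝ)) s = g θ s)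
    (θ : ℕ → Fin ℓ → ℝ) {s : ℕ → ℝ} (hs : Tendsto s atTop (𝓝 0)) :
    ∃ τ : Fin ℓ → ℝ, ∃ φ : ℕ → ℕ, StrictMono φ ∧
      Tendsto (fun k => g (θ (φ k)) (s (φ k))) atTop (𝓝 (g τ 0)) := by
  set τ : ℕ → Fin ℓ → ℝ := fun n i => Int.fract (θ n i)
  have hθτ : ∀ n, g (θ n) (s n) = g (τ n) (s n) := fun n => by
    rw [← hper (τ n) (fun i => ⌊θ n i⌋) (s n)]
    congr 1
    funext i
    exact (Int.fract_add_floor _).symm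
  have hτ : ∀ n, τ n ∈ Icc (0 : Fin ℓ → ℝ) 1 :=
    fun n => ⟨fun i => Int.fract_nonneg _, fun i => (Int.fract_lt_one _).le⟩
  obtain ⟨τ₀, -, φ, hφ, hτφ⟩ := isCompact_Icc.tendsto_subseq hτ
  refine ⟨τ₀, φ, hφ, ?_⟩
  simp only [hθτ]
  exact (hg.tendsto (τ₀, 0)).comp (hτφ.prodMk_nhds (hs.comp hφ.tendsto_atTop))

variable [T2Space E] [AddCommGroup E] [Module ℝ E] {ω : Fin ℓ → ℝ} {μ : ℝ}

theorem eq_zero_of_periodic_of_invariant (hg : Continuous fun p : (Fin ℓ → ℝ) × ℝ => g p.1 p.2)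
    (hper : ∀ (θ : Fin ℓ → ℝ) (e : Fin ℓ → ℤ) (s : ℝ), g (θ + fun i => (e i : ℝ)) s = g θ s)
    (hμ : |μ| < 1) (hinv : ∀ θ, ∀ s ∈ Icc (-1 : ℝ) 1, g θ s = g (θ + ω) (μ * s))
    (hzero : ∀ θ, g θ 0 = 0) (θ : Fin ℓ → ℝ) (s : ℝ) (hs : s ∈ Icc (-1 : ℝ) 1) :
    g θ s = 0 := by
  have horbit := eq_pow_smul_of_eq_smul (c := 1) hμ.le (by simpa using hinv)
  have hpow := tendsto_pow_atTop_nhds_zero_of_abs_lt_one hμ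
  obtain ⟨τ, φ, -, hlim⟩ := exists_subseq_tendsto_of_periodic hg hper (fun n => θ + n • ω)
    (s := fun n => μ ^ n * s) (by simpa using hpow.mul_const s)
  rw [← hzero τ]
  refine tendsto_nhds_unique (tendsto_const_nhds.congr fun k => ?_) hlim
  simpa using horbit (φ k) θ s hs

theorem eq_zero_of_periodic_of_contracting [ContinuousSMul ℝ E]
    (hg : Continuous fun p : (Fin ℓ → ℝ) × ℝ => g p.1 p.2)
    (hper : ∀ (θ : Fin ℓ → ℝ) (e : Fin ℓ → ℤ) (s : ℝ), g (θ + fun i => (e i : ℝ)) s = g θ s)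
    (hμ : |μ| < 1) (hinv : ∀ θ, ∀ s ∈ Icc (-1 : ℝ) 1, g θ s = μ • g (θ + ω) (μ * s))
    (θ : Fin ℓ → ℝ) (s : ℝ) (hs : s ∈ Icc (-1 : ℝ) 1) :
    g θ s = 0 := by
  have hpow := tendsto_pow_atTop_nhds_zero_of_abs_lt_one hμ
  obtain ⟨τ, φ, hφ, hlim⟩ := exists_subseq_tendsto_of_periodic hg hper (fun n => θ + n • ω)
    (s := fun n => μ ^ n * s) (by simpa using hpow.mul_const s)
  have hprod := (hpow.comp hφ.tendsto_atTop).smul hlim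
  rw [zero_smul] at hprod
  refine tendsto_nhds_unique (tendsto_const_nhds.congr fun k => ?_) hprod
  exact eq_pow_smul_of_eq_smul hμ.le hinv (φ k) θ s hs

end Periodic

theorem stmt17_general (d ℓ : ℕ) (J : Matrix (Fin (2 * d)) (Fin (2 * d)) ℝ)
    (F : (Fin (2 * d) → ℝ) → Fin (2 * d) → ℝ) (hF : ContDiff ℝ 1 F)
    (hFsymp : ∀ x, (jacobian F x)ᵀ * J * jacobian F x = J)
    (ω : Fin ℓ → ℝ) (μ : ℝ) (hμ1 : |μ| < 1)
    (W : (Fin ℓ → ℝ) → ℝ → Fin (2 * d) → ℝ)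
    (hW : ContDiff ℝ 1 (fun p : (Fin ℓ → ℝ) × ℝ => W p.1 p.2))
    (hWper : ∀ (θ : Fin ℓ → ℝ) (e : Fin ℓ → ℤ) (s : ℝ),
      W (θ + fun i => (e i : ℝ)) s = W θ s)
    (hinv : ∀ (θ : Fin ℓ → ℝ), ∀ s ∈ Set.Icc (-1 : ℝ) 1,
      F (W θ s) = W (θ + ω) (μ * s))
    (hiso0 : ∀ θ, (DthetaW W θ 0)ᵀ * J * DthetaW W θ 0 = 0) :
    ∀ (θ : Fin ℓ → ℝ), ∀ s ∈ Set.Icc (-1 : ℝ) 1,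
      (DthetaW W θ s)ᵀ * J * DthetaW W θ s = 0 ∧
      ((DthetaW W θ s)ᵀ).mulVec (J.mulVec (DsW W θ s)) = 0 := by
  have hFd := hF.differentiable one_ne_zero
  have hWd := hW.differentiable one_ne_zero
  have hDθ (θ) (s) (hs : s ∈ Icc (-1 : ℝ) 1) :=
    jacobian_mul_DthetaW_of_invariant (θ := θ) (hFd _) hWd fun θ' => hinv θ' s hs
  have hDs (θ) (s) (hs : s ∈ Icc (-1 : ℝ) 1) :=
    jacobian_mulVec_DsW_of_invariant (hFd _) hWd hs (hinv θ)
  intro θ s hs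
  constructor
  · refine eq_zero_of_periodic_of_invariant (ω := ω)
      (g := fun θ s => (DthetaW W θ s)ᵀ * J * DthetaW W θ s) ?_ ?_ hμ1 ?_ hiso0 θ s hs
    · exact ((continuous_DthetaW hW).matrix_transpose.matrix_mul continuous_const).matrix_mul
        (continuous_DthetaW hW)
    · intro θ e s
      simp only [DthetaW_add_period (hWper · e)]
    · intro θ s hs
      rw [← hDθ θ s hs, transpose_mul_mul_eq_of_preserves (hFsymp _)]
  · refine eq_zero_of_periodic_of_contracting (ω := ω)
      (g := fun θ s => (DthetaW W θ s)ᵀ *ᵥ (J *ᵥ DsW W θ s)) ?_ ?_ hμ1 ?_ θ s hs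
    · exact (continuous_DthetaW hW).matrix_transpose.matrix_mulVec
        (continuous_const.matrix_mulVec (continuous_DsW hW))
    · intro θ e s
      simp only [DthetaW_add_period (hWper · e), DsW_add_period (hWper · e)]
    · intro θ s hs
      rw [← hDθ θ s hs, ← mulVec_smul, ← mulVec_smul, ← hDs θ s hs,
        transpose_mulVec_mulVec_eq_of_preserves (hFsymp _)]

/-- Let `J` be a constant antisymmetric `2d×2d` matrix, `F` a `C¹`
symplectic map, `0 < |μ| < 1`, and let `W(θ,s)` be a `C¹`, `ℤ^ℓ`-periodic-in-`θ`
parameterization satisfying the whisker invariance equation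
`F(W(θ,s)) = W(θ+ω, μs)` for `s ∈ [−1,1]`, whose base torus `s = 0` is isotropic.
Then for all `(θ,s)` with `s ∈ [−1,1]`:
(i) `D_θW(θ,s)ᵀ J D_θW(θ,s) = 0`, and (ii) `D_θW(θ,s)ᵀ J ∂_sW(θ,s) = 0`. -/
theorem stmt17 (d ℓ : ℕ) (J : Matrix (Fin (2 * d)) (Fin (2 * d)) ℝ)
    (hJanti : Jᵀ = -J)
    (F : (Fin (2 * d) → ℝ) → Fin (2 * d) → ℝ) (hF : ContDiff ℝ 1 F)
    (hFsymp : ∀ x, (jacobian F x)ᵀ * J * jacobian F x = J)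
    (ω : Fin ℓ → ℝ) (μ : ℝ) (hμ0 : 0 < |μ|) (hμ1 : |μ| < 1)
    (W : (Fin ℓ → ℝ) → ℝ → Fin (2 * d) → ℝ)
    (hW : ContDiff ℝ 1 (fun p : (Fin ℓ → ℝ) × ℝ => W p.1 p.2))
    (hWper : ∀ (θ : Fin ℓ → ℝ) (e : Fin ℓ → ℤ) (s : ℝ),
      W (θ + fun i => (e i : ℝ)) s = W θ s)
    (hinv : ∀ (θ : Fin ℓ → ℝ), ∀ s ∈ Set.Icc (-1 : ℝ) 1,
      F (W θ s) = W (θ + ω) (μ * s))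
    (hiso0 : ∀ θ, (DthetaW W θ 0)ᵀ * J * DthetaW W θ 0 = 0) :
    ∀ (θ : Fin ℓ → ℝ), ∀ s ∈ Set.Icc (-1 : ℝ) 1,
      (DthetaW W θ s)ᵀ * J * DthetaW W θ s = 0 ∧
      ((DthetaW W θ s)ᵀ).mulVec (J.mulVec (DsW W θ s)) = 0 :=
  stmt17_general d ℓ J F hF hFsymp ω μ hμ1 W hW hWper hinv hiso0
end

section
/- (Quadratic error of the Newton step.) Let F: ℝ^m → ℝ^m be C² with sup_x ‖D²F(x)‖ ≤ C₂ < ∞, let ω ∈ ℝ^ℓ, and let K, Δ: ℝ^ℓ → ℝ^m be continuous, bounded, ℤ^ℓ-periodic functions. Define the error E(θ) = F(K(θ)) − K(θ+ω), and suppose Δ solves the linearized equation DF(K(θ)) Δ(θ) − Δ(θ+ω) = −E(θ) for all θ. Then the error of the corrected embedding, Ẽ(θ) = F(K(θ)+Δ(θ)) − (K(θ+ω)+Δ(θ+ω)), satisfies sup_θ ‖Ẽ(θ)‖ ≤ (C₂/2) (sup_θ ‖Δ(θ)‖)². -/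
open Set
open scoped NNReal

section Taylor

variable {E G : Type*} [NormedAddCommGroup E] [NormedSpace ℝ E]
  [NormedAddCommGroup G] [NormedSpace ℝ G] {F : E → G}

lemma lipschitzWith_fderiv_of_norm_iteratedFDeriv_two_le (hF : ContDiff ℝ 2 F) {C : ℝ≥0}
    (hC : ∀ x, ‖iteratedFDeriv ℝ 2 F x‖ ≤ C) : LipschitzWith C (fderiv ℝ F) := by
  refine lipschitzWith_of_nnnorm_fderiv_le
    ((hF.fderiv_right (m := 1) le_rfl).differentiable one_ne_zero) fun x => ?_
  rw [← NNReal.coe_le_coe, coe_nnnorm, ← norm_iteratedFDeriv_one, norm_iteratedFDeriv_fderiv]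
  exact hC x

lemma norm_sub_sub_fderiv_le_of_lipschitzWith_fderiv (hF : Differentiable ℝ F) {C : ℝ≥0}
    (hlip : LipschitzWith C (fderiv ℝ F)) (x h : E) :
    ‖F (x + h) - F x - fderiv ℝ F x h‖ ≤ C / 2 * ‖h‖ ^ 2 := by
  -- Compare `g t = F (x + t • h) - F x - t • F' x h` with `B t = C ‖h‖² t² / 2` on `[0, 1]`.
  let g : ℝ → G := fun t => F (x + t • h) - F x - t • fderiv ℝ F x h
  let g' : ℝ → G := fun t => fderiv ℝ F (x + t • h) h - fderiv ℝ F x h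
  have hg : ∀ t, HasDerivAt g (g' t) t := by
    intro t
    have hline : HasDerivAt (fun s : ℝ => x + s • h) h t := by
      simpa using ((hasDerivAt_id t).smul_const h).const_add x
    exact (((hF _).hasFDerivAt.comp_hasDerivAt t hline).sub_const (F x)).sub
      (by simpa using (hasDerivAt_id t).smul_const (fderiv ℝ F x h))
  have hB : ∀ t, HasDerivAt (fun s : ℝ => C * ‖h‖ ^ 2 * s ^ 2 / 2) (C * ‖h‖ ^ 2 * t) t := by
    intro t
    simpa using (((hasDerivAt_pow 2 t).const_mul (C * ‖h‖ ^ 2)).div_const 2).congr_deriv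
      (by ring)
  have hg' : ∀ t ∈ Ico (0 : ℝ) 1, ‖g' t‖ ≤ C * ‖h‖ ^ 2 * t := by
    intro t ht
    calc ‖g' t‖ = ‖(fderiv ℝ F (x + t • h) - fderiv ℝ F x) h‖ := rfl
      _ ≤ ‖fderiv ℝ F (x + t • h) - fderiv ℝ F x‖ * ‖h‖ := ContinuousLinearMap.le_opNorm _ _
      _ ≤ C * ‖t • h‖ * ‖h‖ := by
          gcongr
          simpa [dist_eq_norm] using hlip.dist_le_mul (x + t • h) x
      _ = C * ‖h‖ ^ 2 * t := by rw [norm_smul, Real.norm_of_nonneg ht.1]; ring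
  have := image_norm_le_of_norm_deriv_right_le_deriv_boundary
    (fun t _ => (hg t).continuousAt.continuousWithinAt) (fun t _ => (hg t).hasDerivWithinAt)
    (by simp [g]) hB hg' (right_mem_Icc.2 zero_le_one)
  simpa [g, div_mul_eq_mul_div] using this

end Taylor

theorem stmt19_general (ℓ m : ℕ) (F : (Fin m → ℝ) → Fin m → ℝ) (C₂ : ℝ)
    (hF : ContDiff ℝ 2 F) (hC₂ : ∀ x, ‖iteratedFDeriv ℝ 2 F x‖ ≤ C₂)
    (ω : Fin ℓ → ℝ) (K Δ : (Fin ℓ → ℝ) → Fin m → ℝ)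
    (hΔb : ∃ c : ℝ, ∀ θ, ‖Δ θ‖ ≤ c)
    (hNewton : ∀ θ, fderiv ℝ F (K θ) (Δ θ) - Δ (θ + ω) = -(F (K θ) - K (θ + ω))) :
    ∀ θ, ‖F (K θ + Δ θ) - (K (θ + ω) + Δ (θ + ω))‖ ≤
      C₂ / 2 * (⨆ θ' : Fin ℓ → ℝ, ‖Δ θ'‖) ^ 2 := by
  intro θ
  lift C₂ to ℝ≥0 using (norm_nonneg _).trans (hC₂ 0)
  obtain ⟨c, hc⟩ := hΔb
  have hΔ_le_sup : ‖Δ θ‖ ≤ ⨆ θ', ‖Δ θ'‖ := le_ciSup ⟨c, forall_mem_range.2 hc⟩ θ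
  -- The linearized equation cancels all first-order terms, leaving the Taylor remainder.
  have hremainder : F (K θ + Δ θ) - (K (θ + ω) + Δ (θ + ω))
      = F (K θ + Δ θ) - F (K θ) - fderiv ℝ F (K θ) (Δ θ) := by
    linear_combination (norm := abel) hNewton θ
  calc ‖F (K θ + Δ θ) - (K (θ + ω) + Δ (θ + ω))‖
      ≤ C₂ / 2 * ‖Δ θ‖ ^ 2 := hremainder ▸ norm_sub_sub_fderiv_le_of_lipschitzWith_fderiv
        (hF.differentiable two_ne_zero)
        (lipschitzWith_fderiv_of_norm_iteratedFDeriv_two_le hF hC₂) _ _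
    _ ≤ C₂ / 2 * (⨆ θ', ‖Δ θ'‖) ^ 2 := by gcongr

/-- **Quadratic error of the Newton step.**
Let `F : ℝ^m → ℝ^m` be `C²` with `‖D²F‖ ≤ C₂` everywhere, and let `K`, `Δ` be
continuous, bounded, `ℤ^ℓ`-periodic maps `ℝ^ℓ → ℝ^m`.  If `Δ` solves the linearized
invariance equation `DF(K(θ)) Δ(θ) − Δ(θ+ω) = −E(θ)` with
`E(θ) = F(K(θ)) − K(θ+ω)`, then the corrected error
`Ẽ(θ) = F(K(θ)+Δ(θ)) − (K(θ+ω)+Δ(θ+ω))` satisfies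
`‖Ẽ(θ)‖ ≤ (C₂/2) (sup_θ' ‖Δ(θ')‖)²` for every `θ`. -/
theorem stmt19 (ℓ m : ℕ) (F : (Fin m → ℝ) → Fin m → ℝ) (C₂ : ℝ)
    (hF : ContDiff ℝ 2 F) (hC₂ : ∀ x, ‖iteratedFDeriv ℝ 2 F x‖ ≤ C₂)
    (ω : Fin ℓ → ℝ) (K Δ : (Fin ℓ → ℝ) → Fin m → ℝ)
    (hKc : Continuous K) (hΔc : Continuous Δ)
    (hKb : ∃ c : ℝ, ∀ θ, ‖K θ‖ ≤ c) (hΔb : ∃ c : ℝ, ∀ θ, ‖Δ θ‖ ≤ c)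
    (hKper : ∀ (θ : Fin ℓ → ℝ) (e : Fin ℓ → ℤ), K (θ + fun i => (e i : ℝ)) = K θ)
    (hΔper : ∀ (θ : Fin ℓ → ℝ) (e : Fin ℓ → ℤ), Δ (θ + fun i => (e i : ℝ)) = Δ θ)
    (hNewton : ∀ θ, fderiv ℝ F (K θ) (Δ θ) - Δ (θ + ω) = -(F (K θ) - K (θ + ω))) :
    ∀ θ, ‖F (K θ + Δ θ) - (K (θ + ω) + Δ (θ + ω))‖ ≤
      C₂ / 2 * (⨆ θ' : Fin ℓ → ℝ, ‖Δ θ'‖) ^ 2 :=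
  stmt19_general ℓ m F C₂ hF hC₂ ω K Δ hΔb hNewton
end
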